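/- arXiv:2603.29702 — 8 statements merged into one kernel-verified Lean document; each statement's English description precedes it below -/
import Mathlib

section
/- Let M be a positive even integer and let B = (b_1, …, b_M) be a sequence of real numbers. Then there exists a vector γ ∈ {−1, +1}^M having exactly M/2 coordinates equal to +1 such that 2·∑_{i=1}^{M} b_i·γ_i ≥ md_M(B). -/
/-!
Subtract the mean, so that the centred values `c i` sum to zero, and give the sign `+1` to the
`M/2` largest entries. For a threshold `t` between the two halves, `D := ∑ γ i * c i` equals
`∑ |c i - t|`, so `∑ |c i| ≤ D + M * |t|`. Since `∑ c i = 0`, the upper half sums to `D / 2` and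
the lower half to `-D / 2`; comparing the upper half with `t` if `t ≥ 0`, and the lower half if
`t < 0`, gives `(M/2) * |t| ≤ D / 2`.
-/

open Finset

variable {ι : Type*} [Fintype ι]

theorem Fintype.exists_card_eq_forall_notMem_le_mem [DecidableEq ι] {α : Type*} [LinearOrder α]
    (f : ι → α) {n : ℕ} (hn : n ≤ Fintype.card ι) :
    ∃ s : Finset ι, #s = n ∧ ∀ i ∈ s, ∀ j ∉ s, f j ≤ f i := by
  induction n with
  | zero => exact ⟨∅, rfl, by simp⟩
  | succ n ih =>
    obtain ⟨s, hcard, hsep⟩ := ih (by omega)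
    have hne : sᶜ.Nonempty := by
      rw [← Finset.card_pos, card_compl]
      omega
    obtain ⟨j, hj, hmax⟩ := exists_max_image sᶜ f hne
    refine ⟨insert j s, by rw [card_insert_of_notMem (mem_compl.1 hj), hcard], ?_⟩
    intro i hi k hk
    rw [mem_insert, not_or] at hk
    rcases mem_insert.1 hi with rfl | hi
    · exact hmax k (mem_compl.2 hk.2)
    · exact hsep i hi k hk.2

theorem Finset.exists_forall_notMem_le_le_forall_mem {α : Type*} [LinearOrder α] [Nonempty α]
    (f : ι → α) {s : Finset ι} (hsep : ∀ i ∈ s, ∀ j ∉ s, f j ≤ f i) :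
    ∃ t, (∀ i ∈ s, t ≤ f i) ∧ ∀ j ∉ s, f j ≤ t := by
  rcases s.eq_empty_or_nonempty with rfl | hne
  · obtain ⟨t, ht⟩ := (univ.image f).bddAbove
    exact ⟨t, by simp, fun j _ => ht (mem_image_of_mem f (mem_univ j))⟩
  · exact ⟨s.inf' hne f, fun i hi => inf'_le f hi,
      fun j hj => (le_inf'_iff hne f).2 fun i hi => hsep i hi j hj⟩

section Threshold

variable [DecidableEq ι] {c : ι → ℝ} {s : Finset ι} {t : ℝ}

theorem sum_abs_sub_eq_sum_sub_sum_compl (hs : ∀ i ∈ s, t ≤ c i) (hsc : ∀ i ∉ s, c i ≤ t)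
    (hcard : #s = #sᶜ) :
    ∑ i, |c i - t| = ∑ i ∈ s, c i - ∑ i ∈ sᶜ, c i := by
  rw [← sum_add_sum_compl s]
  have hpos : ∑ i ∈ s, |c i - t| = ∑ i ∈ s, (c i - t) :=
    sum_congr rfl fun i hi => abs_of_nonneg (sub_nonneg.2 (hs i hi))
  have hneg : ∑ i ∈ sᶜ, |c i - t| = ∑ i ∈ sᶜ, (t - c i) :=
    sum_congr rfl fun i hi => by
      rw [abs_sub_comm]
      exact abs_of_nonneg (sub_nonneg.2 (hsc i (mem_compl.1 hi)))
  rw [hpos, hneg, sum_sub_distrib, sum_sub_distrib, sum_const, sum_const, hcard]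
  ring

theorem sum_abs_le_two_mul_sum_sub_sum_compl (hc : ∑ i, c i = 0) (hs : ∀ i ∈ s, t ≤ c i)
    (hsc : ∀ i ∉ s, c i ≤ t) (hcard : #s = #sᶜ) :
    ∑ i, |c i| ≤ 2 * (∑ i ∈ s, c i - ∑ i ∈ sᶜ, c i) := by
  have hdist := sum_abs_sub_eq_sum_sub_sum_compl hs hsc hcard
  have htri : ∑ i, |c i| ≤ ∑ i, |c i - t| + (#s + #sᶜ) * |t| := by
    rw [← Nat.cast_add, card_add_card_compl, ← nsmul_eq_mul, ← card_univ, ← sum_const,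
      ← sum_add_distrib]
    exact sum_le_sum fun i _ => by linarith [abs_sub_abs_le_abs_sub (c i) t]
  have hcompl : ∑ i ∈ sᶜ, c i = -∑ i ∈ s, c i := by
    linarith [sum_add_sum_compl s c]
  have hhalf : #s * |t| ≤ ∑ i ∈ s, c i := by
    rcases le_or_gt 0 t with ht | ht
    · rw [abs_of_nonneg ht, ← nsmul_eq_mul]
      exact card_nsmul_le_sum s c t hs
    · rw [abs_of_neg ht, hcard]
      have := sum_le_card_nsmul sᶜ c t fun i hi => hsc i (mem_compl.1 hi)
      rw [nsmul_eq_mul] at this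
      linarith
  rw [← hcard] at htri
  linarith

theorem sum_abs_sub_mean_le_two_mul_sum_sub_sum_compl {b : ι → ℝ} (hcard : #s = #sᶜ)
    (hsep : ∀ i ∈ s, ∀ j ∉ s, b j ≤ b i) :
    ∑ i, |b i - (∑ j, b j) / Fintype.card ι| ≤ 2 * (∑ i ∈ s, b i - ∑ i ∈ sᶜ, b i) := by
  set m := (∑ j, b j) / Fintype.card ι
  have hcentred : ∑ i, (b i - m) = 0 := by
    rcases isEmpty_or_nonempty ι with _ | _
    · simp
    · rw [sum_sub_distrib, sum_const, card_univ, nsmul_eq_mul,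
        mul_div_cancel₀ _ (Nat.cast_ne_zero.2 Fintype.card_ne_zero), sub_self]
  obtain ⟨t, hs, hsc⟩ := exists_forall_notMem_le_le_forall_mem b hsep
  have h := sum_abs_le_two_mul_sum_sub_sum_compl (c := fun i => b i - m) (t := t - m) hcentred
    (fun i hi => by linarith [hs i hi]) (fun i hi => by linarith [hsc i hi]) hcard
  simp only [sum_sub_distrib, sum_const, hcard] at h
  linarith

end Threshold

theorem stmt0_general (M : ℕ) (hEven : Even M) (B : Fin M → ℝ) :
    ∃ γ : Fin M → ℝ, (∀ i, γ i = 1 ∨ γ i = -1) ∧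
      (Finset.univ.filter fun i => γ i = 1).card = M / 2 ∧
      ∑ i, |B i - (∑ j, B j) / M| ≤ 2 * ∑ i, B i * γ i := by
  obtain ⟨s, hs, hsep⟩ :=
    Fintype.exists_card_eq_forall_notMem_le_mem B (n := M / 2) (by simp [Nat.div_le_self])
  have hcard : #s = #sᶜ := by
    rw [card_compl, hs, Fintype.card_fin]
    obtain ⟨k, rfl⟩ := hEven
    omega
  refine ⟨fun i => if i ∈ s then 1 else -1, fun i => by dsimp only; split_ifs <;> simp, ?_, ?_⟩
  · convert hs using 2
    ext i
    simp only [mem_filter, mem_univ, true_and]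
    split_ifs <;> norm_num [*]
  · have h := sum_abs_sub_mean_le_two_mul_sum_sub_sum_compl hcard hsep
    rw [Fintype.card_fin] at h
    convert h using 2
    simp [mul_ite, sum_ite, sub_eq_add_neg, compl_eq_univ_sdiff, filter_notMem_eq_sdiff]

/-- For a sequence `B` of `M` reals (`M` positive and even), there is a
sign vector `γ ∈ {−1,+1}^M` with exactly `M/2` coordinates equal to `+1` such that
`2 · ∑ i, B i · γ i ≥ md_M(B)`, where `md_M(B) = ∑ i, |B i − (∑ j, B j)/M|`. -/
theorem stmt0 (M : ℕ) (hM : 0 < M) (hEven : Even M) (B : Fin M → ℝ) :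
    ∃ γ : Fin M → ℝ, (∀ i, γ i = 1 ∨ γ i = -1) ∧
      (Finset.univ.filter fun i => γ i = 1).card = M / 2 ∧
      ∑ i, |B i - (∑ j, B j) / M| ≤ 2 * ∑ i, B i * γ i :=
  stmt0_general M hEven B
end

section
/- There exists an absolute constant C > 0 such that for every even integer M ≥ 2, every integer S ≥ 1, n = M^S, and every real sequence A = (a_1, …, a_n), the tree total deviation satisfies treemd_{M,S}(A) ≤ C·( (∑_{x=1}^{n} |a_x|)·S^{51/100} + (max_{x} |a_x|)·n·2^{−S^{3/200}} ). -/
/-!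
Split `A = A⁺ - A⁻`. For `f ≥ 0` bounded by `K`, the scale-`(t + 1)` term at a child block is
`M^t |c - p|`, where `c` and `p` are the averages of `f` over the child and its parent.
Sorting the pair by the dyadic band `K / 2^(r+1) < max c p ≤ K / 2^r` of its larger value gives
`|c - p| ≤ ε (c + p) + K / 2^R + ∑_{r<R} 2 / (ε H_r) (min c H_r - min p H_r)²`, `H_r = K / 2^r`.
Over the tree the first two terms sum to `2 ε S ‖f‖₁` and `S n K / 2^R`. For a fixed band,
concavity of `min · H` bounds the square deviations of the truncated averages by a quantity that
telescopes from the leaves to the root, to at most `2 H ‖f‖₁`; so each band costs `4 ‖f‖₁ / ε`.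
Take `ε = S^(-49/100)` and `R ≈ S^(3/200) + log₂ S = O(S^(1/50))`.
-/

/-- Sum of the sequence `A` over the interval of indices `(l, r] = {l+1, …, r}`. -/
noncomputable def iSum (A : ℕ → ℝ) (l r : ℕ) : ℝ := ∑ x ∈ Finset.Ioc l r, A x

/-- Total deviation `md_M` of the scale-`s` interval `(l, l + M^s]` of the sequence `A`:
the anchors are `m_i = l + i·M^(s−1)` and
`md = ∑_{i=1}^{M} |A_Σ(m_{i−1}, m_i] − (1/M)·A_Σ(l, l+M^s]|`. -/
noncomputable def mdAt (M s l : ℕ) (A : ℕ → ℝ) : ℝ :=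
  ∑ i ∈ Finset.range M,
    |iSum A (l + i * M ^ (s - 1)) (l + (i + 1) * M ^ (s - 1)) -
      (1 / (M : ℝ)) * iSum A l (l + M ^ s)|

/-- Tree total deviation `treemd_{M,S}` of the sequence `A` (indexed by `{1, …, M^S}`):
the sum of `md_M` over all scale-`s` intervals `(k·M^s, (k+1)·M^s]`, over all scales
`s ∈ {1, …, S}`. -/
noncomputable def treemd (M S : ℕ) (A : ℕ → ℝ) : ℝ :=
  ∑ s ∈ Finset.Icc 1 S, ∑ k ∈ Finset.range (M ^ (S - s)), mdAt M s (k * M ^ s) A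

open Finset

lemma sum_range_sum_range_mul_add {β : Type*} [AddCommMonoid β] (g : ℕ → β) (q m : ℕ) :
    ∑ k ∈ range q, ∑ i ∈ range m, g (k * m + i) = ∑ j ∈ range (q * m), g j := by
  induction q with
  | zero => simp
  | succ q ih => rw [sum_range_succ, ih, Nat.succ_mul, sum_range_add]

lemma sum_iSum_consecutive (A : ℕ → ℝ) (l w q : ℕ) :
    ∑ k ∈ range q, iSum A (l + k * w) (l + (k + 1) * w) = iSum A l (l + q * w) := by
  induction q with
  | zero => simp [iSum]
  | succ q ih =>
    rw [sum_range_succ, ih]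
    exact sum_Ioc_consecutive A (by omega) (by nlinarith)

lemma iSum_sub (f g : ℕ → ℝ) (l r : ℕ) : iSum (f - g) l r = iSum f l r - iSum g l r :=
  sum_sub_distrib f g

lemma mul_add_lt_pow_sub {M S t k i : ℕ} (ht : t < S) (hk : k < M ^ (S - (t + 1)))
    (hi : i < M) : k * M + i < M ^ (S - t) := by
  calc k * M + i < (k + 1) * M := by nlinarith
    _ ≤ M ^ (S - (t + 1)) * M := Nat.mul_le_mul_right _ hk
    _ = M ^ (S - t) := by rw [← pow_succ]; congr 1; omega

noncomputable def blockAvg (M : ℕ) (A : ℕ → ℝ) (t j : ℕ) : ℝ :=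
  iSum A (j * M ^ t) ((j + 1) * M ^ t) / (M : ℝ) ^ t

section BlockAvg

variable {M S : ℕ} {A : ℕ → ℝ}

lemma blockAvg_nonneg (hA : ∀ x, 0 ≤ A x) (t j : ℕ) : 0 ≤ blockAvg M A t j :=
  div_nonneg (sum_nonneg fun x _ => hA x) (by positivity)

lemma blockAvg_le {K : ℝ} (hM : 0 < M) (hAK : ∀ x ∈ Icc 1 (M ^ S), A x ≤ K) {t j : ℕ}
    (ht : t ≤ S) (hj : j < M ^ (S - t)) : blockAvg M A t j ≤ K := by
  have hcard : #(Ioc (j * M ^ t) ((j + 1) * M ^ t)) = M ^ t := by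
    rw [Nat.card_Ioc, Nat.succ_mul, Nat.add_sub_cancel_left]
  have hsub : Ioc (j * M ^ t) ((j + 1) * M ^ t) ⊆ Icc 1 (M ^ S) := by
    intro x hx
    rw [mem_Ioc] at hx
    have : (j + 1) * M ^ t ≤ M ^ S := by
      calc (j + 1) * M ^ t ≤ M ^ (S - t) * M ^ t := Nat.mul_le_mul_right _ hj
        _ = M ^ S := pow_sub_mul_pow M ht
    exact mem_Icc.2 ⟨by omega, by omega⟩
  rw [blockAvg, div_le_iff₀ (by positivity), iSum]
  calc ∑ x ∈ Ioc (j * M ^ t) ((j + 1) * M ^ t), A x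
      ≤ ∑ _x ∈ Ioc (j * M ^ t) ((j + 1) * M ^ t), K := sum_le_sum fun x hx => hAK x (hsub hx)
    _ = K * (M : ℝ) ^ t := by rw [sum_const, hcard, nsmul_eq_mul]; push_cast; ring

lemma mul_blockAvg_succ (hM : 0 < M) (t k : ℕ) :
    (M : ℝ) * blockAvg M A (t + 1) k = ∑ i ∈ range M, blockAvg M A t (k * M + i) := by
  have hsplit := sum_iSum_consecutive A (k * M ^ (t + 1)) (M ^ t) M
  have hleft : ∀ i, k * M ^ (t + 1) + i * M ^ t = (k * M + i) * M ^ t := fun i => by ring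
  have hright : ∀ i, k * M ^ (t + 1) + (i + 1) * M ^ t = (k * M + i + 1) * M ^ t :=
    fun i => by ring
  rw [show k * M ^ (t + 1) + M * M ^ t = (k + 1) * M ^ (t + 1) by ring] at hsplit
  simp only [hright] at hsplit
  simp only [hleft] at hsplit
  have hMt : (M : ℝ) ^ t ≠ 0 := by positivity
  simp only [blockAvg, ← sum_div, ← hsplit]
  field_simp
  ring

end BlockAvg

/-- Sum of `F c p` over all pairs (child block, parent block) of the `M`-ary tree on
`(0, M^S]`, where `c` and `p` are the averages of `A` over the two blocks, weighted by the
length `M^t` of the child block. -/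
noncomputable def edgeSum (M S : ℕ) (A : ℕ → ℝ) (F : ℝ → ℝ → ℝ) : ℝ :=
  ∑ t ∈ range S, (M : ℝ) ^ t * ∑ k ∈ range (M ^ (S - (t + 1))), ∑ i ∈ range M,
    F (blockAvg M A t (k * M + i)) (blockAvg M A (t + 1) k)

noncomputable def levelMass (M S : ℕ) (A : ℕ → ℝ) (φ : ℝ → ℝ) (t : ℕ) : ℝ :=
  (M : ℝ) ^ t * ∑ j ∈ range (M ^ (S - t)), φ (blockAvg M A t j)

section EdgeSum

variable {M S : ℕ} {A : ℕ → ℝ}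

lemma treemd_eq_edgeSum (hM : 0 < M) :
    treemd M S A = edgeSum M S A fun c p => |c - p| := by
  have hMt : ∀ t, (0 : ℝ) < (M : ℝ) ^ t := fun t => by positivity
  rw [treemd, ← Ico_add_one_right_eq_Icc, sum_Ico_eq_sum_range, edgeSum]
  refine sum_congr rfl fun t _ => ?_
  rw [add_comm 1 t, mul_sum]
  refine sum_congr rfl fun k _ => ?_
  rw [mdAt, add_tsub_cancel_right, mul_sum]
  refine sum_congr rfl fun i _ => ?_
  rw [← abs_of_pos (hMt t), ← abs_mul]
  congr 1
  simp only [blockAvg]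
  field_simp
  rw [show k * M ^ (t + 1) + i * M ^ t = (k * M + i) * M ^ t by ring,
    show k * M ^ (t + 1) + (i + 1) * M ^ t = (k * M + i + 1) * M ^ t by ring,
    show k * M ^ (t + 1) + M ^ (t + 1) = (k + 1) * M ^ (t + 1) by ring]
  ring

lemma edgeSum_add (F G : ℝ → ℝ → ℝ) :
    edgeSum M S A (fun c p => F c p + G c p) = edgeSum M S A F + edgeSum M S A G := by
  simp only [edgeSum, sum_add_distrib, mul_add]

lemma edgeSum_sub (F G : ℝ → ℝ → ℝ) :
    edgeSum M S A (fun c p => F c p - G c p) = edgeSum M S A F - edgeSum M S A G := by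
  simp only [edgeSum, sum_sub_distrib, mul_sub]

lemma edgeSum_const_mul (a : ℝ) (F : ℝ → ℝ → ℝ) :
    edgeSum M S A (fun c p => a * F c p) = a * edgeSum M S A F := by
  rw [edgeSum, edgeSum, mul_sum]
  refine sum_congr rfl fun t _ => ?_
  simp only [← mul_sum]
  ring

lemma edgeSum_finset_sum {ι : Type*} (s : Finset ι) (F : ι → ℝ → ℝ → ℝ) :
    edgeSum M S A (fun c p => ∑ r ∈ s, F r c p) = ∑ r ∈ s, edgeSum M S A (F r) := by
  simp only [edgeSum, mul_sum]
  exact (sum_comm.trans (sum_congr rfl fun t _ =>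
    sum_comm.trans (sum_congr rfl fun k _ => sum_comm))).symm

lemma edgeSum_mono {F G : ℝ → ℝ → ℝ}
    (h : ∀ t < S, ∀ k < M ^ (S - (t + 1)),
      ∑ i ∈ range M, F (blockAvg M A t (k * M + i)) (blockAvg M A (t + 1) k) ≤
        ∑ i ∈ range M, G (blockAvg M A t (k * M + i)) (blockAvg M A (t + 1) k)) :
    edgeSum M S A F ≤ edgeSum M S A G := by
  refine sum_le_sum fun t ht => mul_le_mul_of_nonneg_left ?_ (by positivity)
  exact sum_le_sum fun k hk => h t (mem_range.1 ht) k (mem_range.1 hk)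

lemma edgeSum_child (φ : ℝ → ℝ) :
    edgeSum M S A (fun c _ => φ c) = ∑ t ∈ range S, levelMass M S A φ t := by
  refine sum_congr rfl fun t ht => ?_
  rw [levelMass, sum_range_sum_range_mul_add (fun j => φ (blockAvg M A t j)), ← pow_succ]
  congr 4
  have := mem_range.1 ht
  omega

lemma edgeSum_parent (φ : ℝ → ℝ) :
    edgeSum M S A (fun _ p => φ p) = ∑ t ∈ range S, levelMass M S A φ (t + 1) := by
  refine sum_congr rfl fun t _ => ?_
  simp only [levelMass, sum_const, card_range, nsmul_eq_mul, ← mul_sum]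
  ring

lemma edgeSum_sub_eq_levelMass (φ : ℝ → ℝ) :
    edgeSum M S A (fun c p => φ c - φ p) = levelMass M S A φ 0 - levelMass M S A φ S := by
  rw [edgeSum_sub (fun c _ => φ c) (fun _ p => φ p), edgeSum_child, edgeSum_parent,
    ← sum_sub_distrib, sum_range_sub']

lemma levelMass_const_mul (a : ℝ) (φ : ℝ → ℝ) (t : ℕ) :
    levelMass M S A (fun c => a * φ c) t = a * levelMass M S A φ t := by
  simp only [levelMass, ← mul_sum]
  ring

lemma levelMass_nonneg (hA : ∀ x, 0 ≤ A x) {φ : ℝ → ℝ} (hφ : ∀ c, 0 ≤ c → 0 ≤ φ c) (t : ℕ) :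
    0 ≤ levelMass M S A φ t :=
  mul_nonneg (by positivity) (sum_nonneg fun j _ => hφ _ (blockAvg_nonneg hA t j))

lemma levelMass_mono (hA : ∀ x, 0 ≤ A x) {φ ψ : ℝ → ℝ} (h : ∀ c, 0 ≤ c → φ c ≤ ψ c)
    (t : ℕ) : levelMass M S A φ t ≤ levelMass M S A ψ t := by
  unfold levelMass
  gcongr with j
  exact h _ (blockAvg_nonneg hA t j)

lemma levelMass_id (hM : 0 < M) {t : ℕ} (ht : t ≤ S) :
    levelMass M S A (fun c => c) t = iSum A 0 (M ^ S) := by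
  have hMt : (M : ℝ) ^ t ≠ 0 := by positivity
  have hsplit := sum_iSum_consecutive A 0 (M ^ t) (M ^ (S - t))
  simp only [zero_add, pow_sub_mul_pow M ht] at hsplit
  simp only [levelMass, blockAvg, ← sum_div, mul_div_cancel₀ _ hMt, ← hsplit]

lemma edgeSum_child_add_parent (hM : 0 < M) :
    edgeSum M S A (fun c p => c + p) = 2 * S * iSum A 0 (M ^ S) := by
  rw [edgeSum_add (fun c _ => c) (fun _ p => p), edgeSum_child, edgeSum_parent,
    sum_congr rfl fun t ht => levelMass_id hM (mem_range.1 ht).le,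
    sum_congr rfl fun t ht => levelMass_id hM (mem_range.1 ht)]
  simp only [sum_const, card_range, nsmul_eq_mul]
  ring

lemma edgeSum_one : edgeSum M S A (fun _ _ => 1) = S * (M : ℝ) ^ S := by
  rw [edgeSum_parent (fun _ => 1)]
  have hlevel : ∀ t ∈ range S, levelMass M S A (fun _ => 1) (t + 1) = (M : ℝ) ^ S := by
    intro t ht
    simp only [levelMass, sum_const, card_range, nsmul_eq_mul, mul_one]
    rw [Nat.cast_pow, ← pow_add]
    congr 1
    have := mem_range.1 ht
    omega
  rw [sum_congr rfl hlevel, sum_const, card_range, nsmul_eq_mul]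

end EdgeSum

lemma sum_min_le_mul_min {c : ℕ → ℝ} {p : ℝ} (H : ℝ) {n : ℕ}
    (hmean : (n : ℝ) * p = ∑ i ∈ range n, c i) :
    ∑ i ∈ range n, min (c i) H ≤ n * min p H := by
  rcases le_total p H with hpH | hHp
  · rw [min_eq_left hpH, hmean]
    exact sum_le_sum fun i _ => min_le_left _ _
  · rw [min_eq_right hHp]
    calc ∑ i ∈ range n, min (c i) H ≤ ∑ _i ∈ range n, H := sum_le_sum fun i _ => min_le_right _ _
      _ = n * H := by rw [sum_const, card_range, nsmul_eq_mul]

lemma sum_sq_min_sub_min_le {c : ℕ → ℝ} {p : ℝ} (H : ℝ) {n : ℕ}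
    (hmean : (n : ℝ) * p = ∑ i ∈ range n, c i) :
    ∑ i ∈ range n, (min (c i) H - min p H) ^ 2 ≤
      ∑ i ∈ range n,
        ((min (c i) H ^ 2 - min p H ^ 2) - 2 * H * (min (c i) H - min p H)) := by
  have hgap : ∀ i ∈ range n,
      ((min (c i) H ^ 2 - min p H ^ 2) - 2 * H * (min (c i) H - min p H)) -
        (min (c i) H - min p H) ^ 2 = 2 * (H - min p H) * (min p H - min (c i) H) :=
    fun i _ => by ring
  rw [← sub_nonneg, ← sum_sub_distrib, sum_congr rfl hgap, ← mul_sum, sum_sub_distrib,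
    sum_const, card_range, nsmul_eq_mul]
  have hH : 0 ≤ H - min p H := sub_nonneg.2 (min_le_right _ _)
  have hconc : 0 ≤ n * min p H - ∑ i ∈ range n, min (c i) H :=
    sub_nonneg.2 (sum_min_le_mul_min H hmean)
  positivity

lemma edgeSum_sq_min_sub_min_le {M S : ℕ} {A : ℕ → ℝ} (hM : 0 < M) (hA : ∀ x, 0 ≤ A x)
    {H : ℝ} (hH : 0 ≤ H) :
    edgeSum M S A (fun c p => (min c H - min p H) ^ 2) ≤ 2 * H * iSum A 0 (M ^ S) := by
  set L₁ := levelMass M S A fun c => min c H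
  set L₂ := levelMass M S A fun c => min c H ^ 2
  have hL₂ : L₂ 0 ≤ H * L₁ 0 := by
    rw [← levelMass_const_mul]
    refine levelMass_mono hA (fun c hc => ?_) 0
    have : 0 ≤ min c H := le_min hc hH
    nlinarith [min_le_right c H]
  have hL₁0 : 0 ≤ L₁ 0 := levelMass_nonneg hA (fun c hc => le_min hc hH) 0
  have hL₂S : 0 ≤ L₂ S := levelMass_nonneg hA (fun c _ => sq_nonneg _) S
  have hL₁S : L₁ S ≤ iSum A 0 (M ^ S) :=
    (levelMass_mono hA (fun c _ => min_le_left c H) S).trans_eq (levelMass_id hM le_rfl)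
  calc edgeSum M S A (fun c p => (min c H - min p H) ^ 2)
      ≤ edgeSum M S A (fun c p =>
          (min c H ^ 2 - min p H ^ 2) - 2 * H * (min c H - min p H)) :=
        edgeSum_mono fun t _ k _ => sum_sq_min_sub_min_le H (mul_blockAvg_succ hM t k)
    _ = (L₂ 0 - L₂ S) - 2 * H * (L₁ 0 - L₁ S) := by
        rw [edgeSum_sub (fun c p => min c H ^ 2 - min p H ^ 2),
          edgeSum_const_mul (2 * H) (fun c p => min c H - min p H),
          edgeSum_sub_eq_levelMass, edgeSum_sub_eq_levelMass]
    _ ≤ 2 * H * iSum A 0 (M ^ S) := by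
        nlinarith [mul_nonneg hH hL₁0, mul_le_mul_of_nonneg_left hL₁S (by positivity : 0 ≤ 2 * H)]

lemma exists_dyadic_band {K m : ℝ} {R : ℕ} (hmK : m ≤ K) (hKm : K / 2 ^ R < m) :
    ∃ r < R, K / 2 ^ r < 2 * m ∧ m ≤ K / 2 ^ r := by
  have hK : 0 < K := by
    by_contra! hK
    have : K ≤ K / 2 ^ R := by
      rw [le_div_iff₀ (by positivity)]
      nlinarith [one_le_pow₀ (M₀ := ℝ) (a := 2) (n := R) one_le_two]
    linarith
  have hm : 0 < m := lt_of_le_of_lt (by positivity) hKm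
  obtain ⟨r, hlow, hhigh⟩ := exists_nat_pow_near ((one_le_div hm).2 hmK) one_lt_two
  rw [le_div_iff₀ hm] at hlow
  rw [div_lt_iff₀ hm] at hhigh
  refine ⟨r, ?_, ?_, ?_⟩
  · rw [← pow_lt_pow_iff_right₀ (one_lt_two : (1 : ℝ) < 2)]
    rw [div_lt_iff₀ (by positivity)] at hKm
    nlinarith
  · rw [div_lt_iff₀ (by positivity)]
    rw [pow_succ] at hhigh
    linarith
  · rwa [le_div_iff₀ (by positivity), mul_comm]

lemma abs_sub_le_band_term {ε c p H : ℝ} (hε : 0 < ε) (hc : 0 ≤ c) (hp : 0 ≤ p)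
    (hcH : c ≤ H) (hpH : p ≤ H) (hH : H < 2 * max c p) (hjump : ε * (c + p) < |c - p|) :
    |c - p| ≤ 2 / (ε * H) * (min c H - min p H) ^ 2 := by
  have hpos : 0 < |c - p| := lt_of_le_of_lt (by positivity) hjump
  have hHpos : 0 < H := hpos.trans_le (abs_sub_le_of_nonneg_of_le hc hcH hp hpH)
  have hεH : ε * H ≤ 2 * |c - p| := by
    nlinarith [max_le_add_of_nonneg hc hp]
  rw [min_eq_left hcH, min_eq_left hpH, ← sq_abs, div_mul_eq_mul_div,
    le_div_iff₀ (by positivity)]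
  nlinarith

lemma abs_sub_le_bands {ε K c p : ℝ} (R : ℕ) (hε : 0 < ε) (hc : 0 ≤ c) (hp : 0 ≤ p)
    (hcK : c ≤ K) (hpK : p ≤ K) :
    |c - p| ≤ ε * (c + p) + K / 2 ^ R +
      ∑ r ∈ range R, 2 / (ε * (K / 2 ^ r)) * (min c (K / 2 ^ r) - min p (K / 2 ^ r)) ^ 2 := by
  have hK : 0 ≤ K := hc.trans hcK
  have hbands : 0 ≤ ∑ r ∈ range R,
      2 / (ε * (K / 2 ^ r)) * (min c (K / 2 ^ r) - min p (K / 2 ^ r)) ^ 2 :=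
    sum_nonneg fun r _ => by positivity
  by_cases hjump : |c - p| ≤ ε * (c + p)
  · have : 0 ≤ K / 2 ^ R := by positivity
    linarith
  by_cases hsmall : max c p ≤ K / 2 ^ R
  · have := abs_sub_le_of_nonneg_of_le hc (le_max_left c p) hp (le_max_right c p)
    nlinarith [mul_nonneg hε.le (add_nonneg hc hp)]
  obtain ⟨r, hr, hlow, hhigh⟩ := exists_dyadic_band (max_le hcK hpK) (not_le.1 hsmall)
  have hterm := abs_sub_le_band_term hε hc hp ((le_max_left c p).trans hhigh)
    ((le_max_right c p).trans hhigh) hlow (not_le.1 hjump)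
  have hle := single_le_sum (f := fun r =>
      2 / (ε * (K / 2 ^ r)) * (min c (K / 2 ^ r) - min p (K / 2 ^ r)) ^ 2)
    (fun r _ => by positivity) (mem_range.2 hr)
  nlinarith [mul_nonneg hε.le (add_nonneg hc hp), div_nonneg hK (pow_nonneg zero_le_two R)]

theorem treemd_le_of_nonneg {M S : ℕ} {f : ℕ → ℝ} {K ε : ℝ} (hM : 0 < M)
    (hf : ∀ x, 0 ≤ f x) (hfK : ∀ x ∈ Icc 1 (M ^ S), f x ≤ K) (hε : 0 < ε) (R : ℕ) :
    treemd M S f ≤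
      2 * ε * S * iSum f 0 (M ^ S) + S * (M : ℝ) ^ S * K / 2 ^ R +
        4 * R * iSum f 0 (M ^ S) / ε := by
  set T := iSum f 0 (M ^ S)
  have hK : 0 ≤ K := (hf 1).trans (hfK 1 (mem_Icc.2 ⟨le_rfl, Nat.one_le_pow _ _ hM⟩))
  have hT : 0 ≤ T := sum_nonneg fun x _ => hf x
  have hband : ∀ r ∈ range R, 2 / (ε * (K / 2 ^ r)) *
      edgeSum M S f (fun c p => (min c (K / 2 ^ r) - min p (K / 2 ^ r)) ^ 2) ≤ 4 * T / ε := by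
    intro r _
    have hH : 0 ≤ K / 2 ^ r := by positivity
    calc _ ≤ 2 / (ε * (K / 2 ^ r)) * (2 * (K / 2 ^ r) * T) := by
          gcongr
          exact edgeSum_sq_min_sub_min_le hM hf hH
      _ ≤ 4 * T / ε := by
          rcases hH.eq_or_lt with hzero | hpos
          · rw [← hzero]
            simp only [mul_zero, div_zero, zero_mul]
            positivity
          · have hK0 : K ≠ 0 := by rintro rfl; simp at hpos
            exact le_of_eq (by field_simp; ring)
  have hpoint : ∀ t < S, ∀ k < M ^ (S - (t + 1)), ∀ i ∈ range M,
      |blockAvg M f t (k * M + i) - blockAvg M f (t + 1) k| ≤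
        ε * (blockAvg M f t (k * M + i) + blockAvg M f (t + 1) k) + K / 2 ^ R * 1 +
          ∑ r ∈ range R, 2 / (ε * (K / 2 ^ r)) *
            (min (blockAvg M f t (k * M + i)) (K / 2 ^ r) -
              min (blockAvg M f (t + 1) k) (K / 2 ^ r)) ^ 2 := by
    intro t ht k hk i hi
    rw [mul_one]
    exact abs_sub_le_bands R hε (blockAvg_nonneg hf _ _) (blockAvg_nonneg hf _ _)
      (blockAvg_le hM hfK ht.le (mul_add_lt_pow_sub ht hk (mem_range.1 hi)))
      (blockAvg_le hM hfK ht hk)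
  calc treemd M S f = edgeSum M S f fun c p => |c - p| := treemd_eq_edgeSum hM
    _ ≤ edgeSum M S f fun c p => ε * (c + p) + K / 2 ^ R * 1 +
          ∑ r ∈ range R, 2 / (ε * (K / 2 ^ r)) * (min c (K / 2 ^ r) - min p (K / 2 ^ r)) ^ 2 :=
        edgeSum_mono fun t ht k hk => sum_le_sum (hpoint t ht k hk)
    _ = ε * edgeSum M S f (fun c p => c + p) + K / 2 ^ R * edgeSum M S f (fun _ _ => 1) +
          ∑ r ∈ range R, 2 / (ε * (K / 2 ^ r)) *
            edgeSum M S f (fun c p => (min c (K / 2 ^ r) - min p (K / 2 ^ r)) ^ 2) := by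
        rw [edgeSum_add, edgeSum_add, edgeSum_const_mul ε (fun c p => c + p),
          edgeSum_const_mul _ (fun _ _ => 1), edgeSum_finset_sum]
        simp only [edgeSum_const_mul]
    _ ≤ ε * (2 * S * T) + K / 2 ^ R * (S * (M : ℝ) ^ S) + ∑ _r ∈ range R, 4 * T / ε := by
        rw [edgeSum_child_add_parent hM, edgeSum_one]
        gcongr with r hr
        exact hband r hr
    _ = _ := by
        rw [sum_const, card_range, nsmul_eq_mul]
        ring

lemma treemd_sub_le (M S : ℕ) (f g : ℕ → ℝ) :
    treemd M S (f - g) ≤ treemd M S f + treemd M S g := by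
  simp only [treemd, mdAt, iSum_sub, ← sum_add_distrib]
  gcongr with s _ k _ i _
  rw [mul_sub]
  exact (congrArg abs (by ring)).trans_le (abs_sub _ _)

theorem treemd_le {M S : ℕ} {A : ℕ → ℝ} {K ε : ℝ} (hM : 0 < M)
    (hAK : ∀ x ∈ Icc 1 (M ^ S), |A x| ≤ K) (hε : 0 < ε) (R : ℕ) :
    treemd M S A ≤
      2 * ε * S * (∑ x ∈ Icc 1 (M ^ S), |A x|) + 2 * S * (M : ℝ) ^ S * K / 2 ^ R +
        4 * R * (∑ x ∈ Icc 1 (M ^ S), |A x|) / ε := by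
  have hsplit : A = (fun x => (A x)⁺) - fun x => (A x)⁻ :=
    funext fun x => (posPart_sub_negPart (A x)).symm
  have hmass : iSum (fun x => (A x)⁺) 0 (M ^ S) + iSum (fun x => (A x)⁻) 0 (M ^ S) =
      ∑ x ∈ Icc 1 (M ^ S), |A x| := by
    rw [iSum, iSum, ← sum_add_distrib, ← Icc_add_one_left_eq_Ioc, zero_add]
    exact sum_congr rfl fun x _ => posPart_add_negPart (A x)
  have hpos := treemd_le_of_nonneg hM (fun x => posPart_nonneg (A x)) (fun x hx =>
    ((le_add_of_nonneg_right (negPart_nonneg (A x))).trans_eq (posPart_add_negPart _)).trans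
      (hAK x hx)) hε R
  have hneg := treemd_le_of_nonneg hM (fun x => negPart_nonneg (A x)) (fun x hx =>
    ((le_add_of_nonneg_left (posPart_nonneg (A x))).trans_eq (posPart_add_negPart _)).trans
      (hAK x hx)) hε R
  calc treemd M S A ≤ treemd M S (fun x => (A x)⁺) + treemd M S (fun x => (A x)⁻) := by
        conv_lhs => rw [hsplit]
        exact treemd_sub_le M S _ _
    _ ≤ _ := add_le_add hpos hneg
    _ = _ := by rw [← hmass]; ring

lemma exists_band_count {S : ℕ} (hS : 1 ≤ S) :
    ∃ R : ℕ, (R : ℝ) ≤ 102 * (S : ℝ) ^ ((1 : ℝ) / 50) ∧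
      (S : ℝ) / 2 ^ R ≤ (2 : ℝ) ^ (-(S : ℝ) ^ ((3 : ℝ) / 200)) := by
  have hS1 : (1 : ℝ) ≤ S := by exact_mod_cast hS
  have hSpos : (0 : ℝ) < S := one_pos.trans_le hS1
  set ρ := (S : ℝ) ^ ((3 : ℝ) / 200) + Real.logb 2 S
  have hlogb0 : 0 ≤ Real.logb 2 S := Real.logb_nonneg one_lt_two hS1
  have hlogb : Real.logb 2 S ≤ 100 * (S : ℝ) ^ ((1 : ℝ) / 50) := by
    have hlog := Real.log_le_rpow_div hSpos.le (by norm_num : (0 : ℝ) < 1 / 50)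
    have hlog2 := Real.log_two_gt_d9
    have hpow : 0 ≤ (S : ℝ) ^ ((1 : ℝ) / 50) := by positivity
    rw [Real.logb, div_le_iff₀ (by positivity)]
    nlinarith
  have hsmall : (S : ℝ) ^ ((3 : ℝ) / 200) ≤ (S : ℝ) ^ ((1 : ℝ) / 50) :=
    Real.rpow_le_rpow_of_exponent_le hS1 (by norm_num)
  have hone : 1 ≤ (S : ℝ) ^ ((1 : ℝ) / 50) := Real.one_le_rpow hS1 (by norm_num)
  refine ⟨⌈ρ⌉₊, ?_, ?_⟩
  · have := Nat.ceil_lt_add_one (by positivity : 0 ≤ ρ)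
    linarith
  · have hpow : (2 : ℝ) ^ ((S : ℝ) ^ ((3 : ℝ) / 200)) * S ≤ 2 ^ ⌈ρ⌉₊ := by
      calc (2 : ℝ) ^ ((S : ℝ) ^ ((3 : ℝ) / 200)) * S
          = 2 ^ ((S : ℝ) ^ ((3 : ℝ) / 200)) * 2 ^ Real.logb 2 S := by
            rw [Real.rpow_logb two_pos (by norm_num) hSpos]
        _ = 2 ^ ρ := (Real.rpow_add two_pos _ _).symm
        _ ≤ 2 ^ (⌈ρ⌉₊ : ℝ) := Real.rpow_le_rpow_of_exponent_le one_le_two (Nat.le_ceil ρ)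
        _ = 2 ^ ⌈ρ⌉₊ := Real.rpow_natCast 2 _
    rw [Real.rpow_neg zero_le_two, div_le_iff₀ (by positivity), inv_mul_eq_div,
      le_div_iff₀ (by positivity)]
    linarith

/-- There is an absolute constant `C > 0` such that for every even `M ≥ 2`,
every `S ≥ 1`, `n = M^S`, and every real sequence `A`,
`treemd_{M,S}(A) ≤ C·((∑_{x=1}^n |a_x|)·S^{51/100} + (max_x |a_x|)·n·2^{−S^{3/200}})`. -/
theorem stmt2 :
    ∃ C : ℝ, 0 < C ∧
      ∀ (M S : ℕ) (hM : 2 ≤ M) (_hE : Even M) (hS : 1 ≤ S) (A : ℕ → ℝ),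
        treemd M S A ≤
          C * ((∑ x ∈ Finset.Icc 1 (M ^ S), |A x|) * (S : ℝ) ^ ((51 : ℝ) / 100) +
            ((Finset.Icc 1 (M ^ S)).sup'
                (Finset.nonempty_Icc.mpr (Nat.one_le_pow S M (by omega)))
                fun x => |A x|) *
              (M ^ S : ℝ) * (2 : ℝ) ^ (-(S : ℝ) ^ ((3 : ℝ) / 200))) := by
  refine ⟨410, by norm_num, fun M S hM _ hS A => ?_⟩
  set N := ∑ x ∈ Icc 1 (M ^ S), |A x|
  have hMS : 1 ≤ M ^ S := Nat.one_le_pow S M (by omega)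
  set K := (Icc 1 (M ^ S)).sup' (nonempty_Icc.mpr hMS) fun x => |A x|
  have hAK : ∀ x ∈ Icc 1 (M ^ S), |A x| ≤ K := fun x hx => le_sup' (fun x => |A x|) hx
  have hK : 0 ≤ K := (abs_nonneg _).trans (hAK 1 (mem_Icc.2 ⟨le_rfl, hMS⟩))
  have hN : 0 ≤ N := sum_nonneg fun x _ => abs_nonneg _
  have hSpos : (0 : ℝ) < S := by exact_mod_cast hS
  obtain ⟨R, hR, hRS⟩ := exists_band_count hS
  set ε := (S : ℝ) ^ (-(49 : ℝ) / 100)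
  have hε : 0 < ε := by positivity
  have hεS : ε * S = (S : ℝ) ^ ((51 : ℝ) / 100) := by
    rw [← Real.rpow_add_one hSpos.ne']
    norm_num
  have hRε : R / ε ≤ 102 * (S : ℝ) ^ ((51 : ℝ) / 100) := by
    rw [div_eq_mul_inv, ← Real.rpow_neg hSpos.le, neg_div, neg_neg]
    calc (R : ℝ) * (S : ℝ) ^ ((49 : ℝ) / 100)
        ≤ 102 * (S : ℝ) ^ ((1 : ℝ) / 50) * (S : ℝ) ^ ((49 : ℝ) / 100) := by gcongr
      _ = 102 * (S : ℝ) ^ ((51 : ℝ) / 100) := by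
        rw [mul_assoc, ← Real.rpow_add hSpos]
        norm_num
  have hMK : 0 ≤ (M : ℝ) ^ S * K := by positivity
  calc treemd M S A
      ≤ 2 * (ε * S) * N + 2 * ((M : ℝ) ^ S * K) * (S / 2 ^ R) + 4 * N * (R / ε) := by
        convert treemd_le (by omega) hAK hε R using 2 <;> ring
    _ ≤ 2 * (S : ℝ) ^ ((51 : ℝ) / 100) * N +
          2 * ((M : ℝ) ^ S * K) * (2 : ℝ) ^ (-(S : ℝ) ^ ((3 : ℝ) / 200)) +
          4 * N * (102 * (S : ℝ) ^ ((51 : ℝ) / 100)) := by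
        rw [hεS]
        gcongr
    _ ≤ _ := by
        have : 0 ≤ N * (S : ℝ) ^ ((51 : ℝ) / 100) := by positivity
        have : 0 ≤ K * (M : ℝ) ^ S * (2 : ℝ) ^ (-(S : ℝ) ^ ((3 : ℝ) / 200)) := by positivity
        nlinarith
end

section
/- Let S ≥ 1 be an integer and n = 2^S. Define the sequences A = (a_1, …, a_n) and B = (b_1, …, b_n) by a_x := 2^{ν(x−1)}, where ν(k) denotes the number of 1's in the binary representation of k, and b_x := 1 for all x. Then treerd_{2,S}(A, B) = n·S/3. In particular, the scaled tree total deviation can be as large as Ω(S·∑_x b_x), so an upper bound of the form O((∑_x b_x)·S^{51/100} + (max_x a_x)·n·2^{−S^{3/200}}) on treerd_{2,S}(A,B) fails without a lower-bound hypothesis on the ratios B_{Σ(l,r]}/A_{Σ(l,r]}. -/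
/-- Scaled total deviation `rd_M` of `A` by `B` on the scale-`s` interval `(l, l + M^s]`:
`(B_Σ/A_Σ)·md_M(A)` if `A_Σ ≠ 0`, and `0` otherwise. -/
noncomputable def rdAt (M s l : ℕ) (A B : ℕ → ℝ) : ℝ :=
  if iSum A l (l + M ^ s) = 0 then 0
  else (iSum B l (l + M ^ s) / iSum A l (l + M ^ s)) * mdAt M s l A

/-- Scaled tree total deviation `treerd_{M,S}(A,B)`: sum of `rd_M` over all recursion
intervals. -/
noncomputable def treerd (M S : ℕ) (A B : ℕ → ℝ) : ℝ :=
  ∑ s ∈ Finset.Icc 1 S, ∑ k ∈ Finset.range (M ^ (S - s)), rdAt M s (k * M ^ s) A B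

/-!
Let `w x = 2 ^ ν(x - 1)`. Splitting a dyadic block `(k 2^s, (k+1) 2^s]` into its two halves
multiplies the weight of the right half by `2` relative to the left one (the binary digits gain
a `1` instead of a `0`), so the block sum is `2^ν(k) · 3^s`. On every interval of scale `s` the
two halves therefore carry `1/3` and `2/3` of the total, the total deviation is `1/3` of the
total mass, and the scaled deviation is `2^s / 3`. Each of the `S` scales contributes
`2^(S-s) · 2^s / 3 = 2^S / 3`.
-/

lemma Nat.digits_sum_mul_add {b : ℕ} (hb : 1 < b) {d : ℕ} (hd : d < b) (k : ℕ) :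
    (Nat.digits b (b * k + d)).sum = (Nat.digits b k).sum + d := by
  rw [add_comm _ d, add_comm _ d]
  rcases eq_or_ne d 0 with rfl | hd0
  · rcases eq_or_ne k 0 with rfl | hk0
    · simp
    · rw [Nat.digits_add b hb 0 k hd (Or.inr hk0)]
      simp
  · simp [Nat.digits_add b hb d k hd (Or.inl hd0)]

lemma Nat.digits_two_sum_two_mul (k : ℕ) : (Nat.digits 2 (2 * k)).sum = (Nat.digits 2 k).sum :=
  Nat.digits_sum_mul_add one_lt_two two_pos k

lemma Nat.digits_two_sum_two_mul_add_one (k : ℕ) :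
    (Nat.digits 2 (2 * k + 1)).sum = (Nat.digits 2 k).sum + 1 :=
  Nat.digits_sum_mul_add one_lt_two one_lt_two k

lemma abs_sub_half_add_abs_sub_half (x y : ℝ) :
    |x - 1 / 2 * (x + y)| + |y - 1 / 2 * (x + y)| = |x - y| := by
  rw [show x - 1 / 2 * (x + y) = (x - y) / 2 by ring,
    show y - 1 / 2 * (x + y) = -((x - y) / 2) by ring, abs_neg, abs_div]
  norm_num

lemma iSum_add_iSum (A : ℕ → ℝ) {l m r : ℕ} (hlm : l ≤ m) (hmr : m ≤ r) :
    iSum A l m + iSum A m r = iSum A l r :=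
  Finset.sum_Ioc_consecutive A hlm hmr

lemma iSum_const (c : ℝ) (l r : ℕ) : iSum (fun _ => c) l r = (r - l : ℕ) * c := by
  simp [iSum, Nat.card_Ioc]

noncomputable def dyadicSum (A : ℕ → ℝ) (s k : ℕ) : ℝ := iSum A (k * 2 ^ s) (k * 2 ^ s + 2 ^ s)

lemma dyadicSum_succ (A : ℕ → ℝ) (s k : ℕ) :
    dyadicSum A (s + 1) k = dyadicSum A s (2 * k) + dyadicSum A s (2 * k + 1) := by
  rw [dyadicSum, dyadicSum, dyadicSum, show (2 * k + 1) * 2 ^ s = 2 * k * 2 ^ s + 2 ^ s by ring,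
    iSum_add_iSum A (Nat.le_add_right _ _) (Nat.le_add_right _ _)]
  congr 1 <;> ring

lemma mdAt_two_mul_two_pow (A : ℕ → ℝ) (s k : ℕ) :
    mdAt 2 (s + 1) (k * 2 ^ (s + 1)) A = |dyadicSum A s (2 * k) - dyadicSum A s (2 * k + 1)| := by
  have hleft : iSum A (k * 2 ^ (s + 1) + 0 * 2 ^ s) (k * 2 ^ (s + 1) + (0 + 1) * 2 ^ s) =
      dyadicSum A s (2 * k) := by
    rw [dyadicSum]; congr 1 <;> ring
  have hright : iSum A (k * 2 ^ (s + 1) + 1 * 2 ^ s) (k * 2 ^ (s + 1) + (1 + 1) * 2 ^ s) =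
      dyadicSum A s (2 * k + 1) := by
    rw [dyadicSum]; congr 1 <;> ring
  have htotal : iSum A (k * 2 ^ (s + 1)) (k * 2 ^ (s + 1) + 2 ^ (s + 1)) =
      dyadicSum A s (2 * k) + dyadicSum A s (2 * k + 1) :=
    dyadicSum_succ A s k
  rw [mdAt, Finset.sum_range_succ, Finset.sum_range_one, Nat.add_sub_cancel, hleft, hright,
    htotal, Nat.cast_ofNat, abs_sub_half_add_abs_sub_half]

lemma treerd_eq_of_rdAt_eq (M S : ℕ) (A B : ℕ → ℝ) (c : ℝ)
    (h : ∀ s, 1 ≤ s → ∀ k, rdAt M s (k * M ^ s) A B = c * M ^ s) :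
    treerd M S A B = S * (c * M ^ S) := by
  have hscale : ∀ s ∈ Finset.Icc 1 S,
      ∑ k ∈ Finset.range (M ^ (S - s)), rdAt M s (k * M ^ s) A B = c * M ^ S := by
    intro s hs
    rw [Finset.mem_Icc] at hs
    rw [Finset.sum_congr rfl fun k _ => h s hs.1 k, Finset.sum_const, Finset.card_range,
      nsmul_eq_mul, Nat.cast_pow, mul_left_comm, ← pow_add, Nat.sub_add_cancel hs.2]
  rw [treerd, Finset.sum_congr rfl hscale, Finset.sum_const, Nat.card_Icc, nsmul_eq_mul,
    Nat.add_sub_cancel]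

noncomputable def binaryWeight (x : ℕ) : ℝ := 2 ^ (Nat.digits 2 (x - 1)).sum

lemma dyadicSum_binaryWeight (s k : ℕ) :
    dyadicSum binaryWeight s k = 2 ^ (Nat.digits 2 k).sum * 3 ^ s := by
  induction s generalizing k with
  | zero => simp [dyadicSum, iSum, binaryWeight, Nat.Ioc_succ_singleton]
  | succ s ih =>
    rw [dyadicSum_succ, ih, ih, Nat.digits_two_sum_two_mul, Nat.digits_two_sum_two_mul_add_one]
    ring

lemma rdAt_binaryWeight (s k : ℕ) :
    rdAt 2 (s + 1) (k * 2 ^ (s + 1)) binaryWeight (fun _ => 1) = 1 / 3 * 2 ^ (s + 1) := by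
  have hA : iSum binaryWeight (k * 2 ^ (s + 1)) (k * 2 ^ (s + 1) + 2 ^ (s + 1)) =
      2 ^ (Nat.digits 2 k).sum * 3 ^ (s + 1) :=
    dyadicSum_binaryWeight (s + 1) k
  have hB : iSum (fun _ => (1 : ℝ)) (k * 2 ^ (s + 1)) (k * 2 ^ (s + 1) + 2 ^ (s + 1)) =
      2 ^ (s + 1) := by
    rw [iSum_const, Nat.add_sub_cancel_left]
    push_cast
    ring
  have hmd : mdAt 2 (s + 1) (k * 2 ^ (s + 1)) binaryWeight =
      2 ^ (Nat.digits 2 k).sum * 3 ^ s := by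
    rw [mdAt_two_mul_two_pow, dyadicSum_binaryWeight, dyadicSum_binaryWeight,
      Nat.digits_two_sum_two_mul, Nat.digits_two_sum_two_mul_add_one, abs_sub_comm, pow_succ]
    rw [abs_of_nonneg (by ring_nf; positivity)]
    ring
  rw [rdAt, if_neg (by rw [hA]; positivity), hA, hB, hmd]
  field_simp
  ring

theorem stmt5_general (S : ℕ) :
    treerd 2 S (fun x => (2 : ℝ) ^ ((Nat.digits 2 (x - 1)).sum)) (fun _ => 1) =
      (2 : ℝ) ^ S * S / 3 := by
  have hscale : ∀ s, 1 ≤ s → ∀ k,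
      rdAt 2 s (k * 2 ^ s) binaryWeight (fun _ => 1) = 1 / 3 * ((2 : ℕ) : ℝ) ^ s := by
    intro s hs k
    obtain ⟨t, rfl⟩ : ∃ t, s = t + 1 := ⟨s - 1, by omega⟩
    exact_mod_cast rdAt_binaryWeight t k
  rw [show (fun x => (2 : ℝ) ^ ((Nat.digits 2 (x - 1)).sum)) = binaryWeight from rfl,
    treerd_eq_of_rdAt_eq 2 S _ _ _ hscale]
  push_cast
  ring

/-- For `S ≥ 1`, `n = 2^S`, `a_x = 2^{ν(x−1)}` (where `ν(k)` is the number
of 1's in the binary representation of `k`, here `(Nat.digits 2 k).sum`), and `b_x = 1`,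
the scaled tree total deviation satisfies `treerd_{2,S}(A,B) = n·S/3`. -/
theorem stmt5 (S : ℕ) (hS : 1 ≤ S) :
    treerd 2 S (fun x => (2 : ℝ) ^ ((Nat.digits 2 (x - 1)).sum)) (fun _ => 1) =
      (2 : ℝ) ^ S * S / 3 :=
  stmt5_general S
end

section
/- Let M ≥ 2 be an even integer, S ≥ 1 an integer, n = M^S, and let A = (a_1, …, a_n) be any real sequence. Then there exists a balanced sign family (γ_I)_I, indexed by the recursion intervals I, such that treemd_{M,S}(A) ≤ 2·∑_{x=1}^{n} a_x·g_x, where g_x := ∑_{s=1}^{S} g_{x,s}. -/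
attribute [local instance] Classical.propDecidable

/-!
Fix a scale-`s` interval with sub-interval sums `b₀, …, b_{M-1}` and mean `μ`. Give the sign `+1`
to the `M/2` largest sums and `-1` to the others, and let `t` be a threshold separating the two
groups. The signs agree with those of `bᵢ - t`, and they are balanced, so
`∑ γᵢ bᵢ = ∑ |bᵢ - t|`. On the other hand `∑ |bᵢ - μ| ≤ ∑ |bᵢ - t| + M |t - μ|`, and
`M |t - μ| = |∑ (bᵢ - t)| ≤ ∑ |bᵢ - t|`, so `md_M ≤ 2 ∑ γᵢ bᵢ`. Summing over all recursion
intervals and regrouping by index gives the theorem.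
-/

open Finset

section Deviation

variable {ι : Type*} (s : Finset ι) (b : ι → ℝ)

theorem sum_abs_sub_le_two_mul_sum_abs_sub {μ : ℝ} (hμ : #s * μ = ∑ i ∈ s, b i) (t : ℝ) :
    ∑ i ∈ s, |b i - μ| ≤ 2 * ∑ i ∈ s, |b i - t| := by
  have hshift : #s * |t - μ| ≤ ∑ i ∈ s, |b i - t| :=
    calc #s * |t - μ| = |∑ i ∈ s, (b i - t)| := by
          rw [sum_sub_distrib, sum_const, nsmul_eq_mul, ← hμ, ← mul_sub, abs_mul, Nat.abs_cast,
            abs_sub_comm]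
      _ ≤ ∑ i ∈ s, |b i - t| := abs_sum_le_sum_abs _ _
  calc ∑ i ∈ s, |b i - μ| ≤ ∑ i ∈ s, (|b i - t| + |t - μ|) :=
        sum_le_sum fun i _ => abs_sub_le _ _ _
    _ = ∑ i ∈ s, |b i - t| + #s * |t - μ| := by rw [sum_add_distrib, sum_const, nsmul_eq_mul]
    _ ≤ 2 * ∑ i ∈ s, |b i - t| := by linarith

variable [DecidableEq ι]

theorem exists_subset_card_eq_dominating {k : ℕ} (hk : k ≤ #s) :
    ∃ T ⊆ s, #T = k ∧ ∀ i ∈ T, ∀ j ∈ s \ T, b j ≤ b i := by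
  obtain ⟨T, hT, hmax⟩ := exists_max_image (s.powersetCard k) (fun T => ∑ i ∈ T, b i)
    (powersetCard_nonempty.mpr hk)
  obtain ⟨hTs, hTk⟩ := mem_powersetCard.mp hT
  refine ⟨T, hTs, hTk, fun i hi j hj => ?_⟩
  obtain ⟨hjs, hjT⟩ := mem_sdiff.mp hj
  have hjT' : j ∉ T.erase i := fun h => hjT (mem_of_mem_erase h)
  by_contra! hlt
  have hswap : insert j (T.erase i) ∈ s.powersetCard k := by
    rw [mem_powersetCard, card_insert_of_notMem hjT', card_erase_of_mem hi]
    exact ⟨insert_subset hjs ((erase_subset i T).trans hTs),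
      by have := card_pos.mpr ⟨i, hi⟩; omega⟩
  have := hmax _ hswap
  rw [sum_insert hjT', sum_erase_eq_sub hi] at this
  linarith

variable {T : Finset ι}

theorem sum_sign_eq_zero (hT : T ⊆ s) (hcard : 2 * #T = #s) :
    ∑ i ∈ s, (if i ∈ T then (1 : ℝ) else -1) = 0 := by
  have hcompl : #(s \ T) = #T := by rw [card_sdiff_of_subset hT]; omega
  rw [← sum_sdiff hT, sum_congr rfl fun i hi => if_neg (mem_sdiff.mp hi).2,
    sum_congr rfl fun i hi => if_pos hi]
  simp [hcompl]

theorem filter_sign_eq_one (hT : T ⊆ s) :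
    s.filter (fun i => (if i ∈ T then (1 : ℝ) else -1) = 1) = T := by
  ext i
  by_cases hi : i ∈ T
  · simp [hi, hT hi]
  · norm_num [hi]

theorem sum_abs_sub_eq_sum_sign_mul (hT : T ⊆ s) (hcard : 2 * #T = #s) {t : ℝ}
    (hup : ∀ i ∈ T, t ≤ b i) (hdown : ∀ j ∈ s \ T, b j ≤ t) :
    ∑ i ∈ s, |b i - t| = ∑ i ∈ s, (if i ∈ T then 1 else -1) * b i := by
  have hsign : ∀ i ∈ s, |b i - t| = (if i ∈ T then 1 else -1) * (b i - t) := by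
    intro i hi
    split_ifs with hiT
    · rw [abs_of_nonneg (sub_nonneg.mpr (hup i hiT)), one_mul]
    · rw [abs_of_nonpos (sub_nonpos.mpr (hdown i (mem_sdiff.mpr ⟨hi, hiT⟩))), neg_one_mul]
  simp_rw [sum_congr rfl hsign, mul_sub, sum_sub_distrib, ← sum_mul, sum_sign_eq_zero s hT hcard,
    zero_mul, sub_zero]

theorem sum_abs_sub_mean_le_two_mul_sum_sign_mul (hT : T ⊆ s) (hcard : 2 * #T = #s)
    (hdom : ∀ i ∈ T, ∀ j ∈ s \ T, b j ≤ b i) {μ : ℝ} (hμ : #s * μ = ∑ i ∈ s, b i) :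
    ∑ i ∈ s, |b i - μ| ≤ 2 * ∑ i ∈ s, (if i ∈ T then 1 else -1) * b i := by
  obtain ⟨t, hup, hdown⟩ : ∃ t, (∀ i ∈ T, t ≤ b i) ∧ ∀ j ∈ s \ T, b j ≤ t := by
    rcases T.eq_empty_or_nonempty with rfl | hne
    · have hs : s = ∅ := card_eq_zero.mp (by simpa using hcard.symm)
      exact ⟨0, by simp, by simp [hs]⟩
    · obtain ⟨i₀, hi₀, hmin⟩ := exists_min_image T b hne
      exact ⟨b i₀, hmin, hdom i₀ hi₀⟩
  rw [← sum_abs_sub_eq_sum_sign_mul s b hT hcard hup hdown]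
  exact sum_abs_sub_le_two_mul_sum_abs_sub s b hμ t

end Deviation

theorem sum_Ioc_eq_sum_range_sum_Ioc {β : Type*} [AddCommMonoid β] (f : ℕ → β) (l w N : ℕ) :
    ∑ x ∈ Ioc l (l + N * w), f x
      = ∑ i ∈ range N, ∑ x ∈ Ioc (l + i * w) (l + (i + 1) * w), f x := by
  induction N with
  | zero => simp
  | succ N ih =>
    rw [sum_range_succ, ← ih, sum_Ioc_consecutive f (Nat.le_add_right l (N * w))
      (by gcongr; omega)]

section Tree

variable (M : ℕ) (A : ℕ → ℝ)

noncomputable def subintervalSum (s l i : ℕ) : ℝ :=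
  iSum A (l + i * M ^ (s - 1)) (l + (i + 1) * M ^ (s - 1))

variable {M} {s : ℕ}

theorem sum_subintervalSum (hs : 1 ≤ s) (l : ℕ) :
    ∑ i ∈ range M, subintervalSum M A s l i = iSum A l (l + M ^ s) := by
  rw [iSum, ← mul_pow_sub_one (by omega) M, sum_Ioc_eq_sum_range_sum_Ioc]
  rfl

theorem mdAt_le_two_mul_sum_sign_mul (hM : 0 < M) (hs : 1 ≤ s) (l : ℕ) {T : Finset ℕ}
    (hT : T ⊆ range M) (hcard : 2 * #T = M)
    (hdom : ∀ i ∈ T, ∀ j ∈ range M \ T, subintervalSum M A s l j ≤ subintervalSum M A s l i) :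
    mdAt M s l A ≤ 2 * ∑ i ∈ range M, (if i ∈ T then 1 else -1) * subintervalSum M A s l i := by
  refine sum_abs_sub_mean_le_two_mul_sum_sign_mul (range M) _ hT (by rwa [card_range]) hdom ?_
  rw [card_range, sum_subintervalSum A hs]
  field_simp

theorem div_pow_eq_and_mod_eq (hM : 0 < M) (hs : 1 ≤ s) {k i x : ℕ} (hi : i < M)
    (hx : x ∈ Ioc (k * M ^ s + i * M ^ (s - 1)) (k * M ^ s + (i + 1) * M ^ (s - 1))) :
    (x - 1) / M ^ s = k ∧ (x - 1) / M ^ (s - 1) % M = i := by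
  obtain ⟨hlo, hhi⟩ := mem_Ioc.mp hx
  obtain ⟨y, rfl⟩ : ∃ y, x = y + 1 := ⟨x - 1, by omega⟩
  rw [← mul_pow_sub_one (by omega) M] at hlo hhi ⊢
  have hdiv : y / M ^ (s - 1) = M * k + i := by
    apply Nat.div_eq_of_lt_le <;> linarith
  rw [Nat.add_sub_cancel, mul_comm M, ← Nat.div_div_eq_div_mul, hdiv, Nat.mul_add_div hM, Nat.mul_add_mod,
    Nat.div_eq_of_lt hi, Nat.mod_eq_of_lt hi]
  exact ⟨rfl, rfl⟩

theorem sum_sum_mul_subintervalSum (hM : 0 < M) (hs : 1 ≤ s) {S : ℕ} (hsS : s ≤ S)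
    (g : ℕ → ℕ → ℝ) :
    ∑ k ∈ range (M ^ (S - s)), ∑ i ∈ range M, g k i * subintervalSum M A s (k * M ^ s) i
      = ∑ x ∈ Icc 1 (M ^ S), A x * g ((x - 1) / M ^ s) ((x - 1) / M ^ (s - 1) % M) := by
  have hS : M ^ S = 0 + M ^ (S - s) * M ^ s := by rw [zero_add, ← pow_add, Nat.sub_add_cancel hsS]
  have hIcc : Icc 1 (M ^ S) = Ioc 0 (M ^ S) := Icc_add_one_left_eq_Ioc 0 _
  rw [hIcc, hS, sum_Ioc_eq_sum_range_sum_Ioc]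
  refine sum_congr rfl fun k _ => ?_
  have hblock := sum_Ioc_eq_sum_range_sum_Ioc
    (fun x => A x * g ((x - 1) / M ^ s) ((x - 1) / M ^ (s - 1) % M)) (k * M ^ s) (M ^ (s - 1)) M
  rw [mul_pow_sub_one (by omega) M] at hblock
  rw [zero_add, zero_add, add_one_mul, hblock]
  refine sum_congr rfl fun i hi => ?_
  rw [subintervalSum, iSum, mul_sum]
  refine sum_congr rfl fun x hx => ?_
  obtain ⟨hk, hi⟩ := div_pow_eq_and_mod_eq hM hs (mem_range.mp hi) hx
  rw [hk, hi, mul_comm]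

end Tree

theorem stmt10_general (M S : ℕ) (hM : 2 ≤ M) (hEven : Even M) (A : ℕ → ℝ) :
    ∃ γ : ℕ → ℕ → ℕ → ℝ,
      (∀ s ∈ Finset.Icc 1 S, ∀ k ∈ Finset.range (M ^ (S - s)),
        (∀ i ∈ Finset.range M, γ s k i = 1 ∨ γ s k i = -1) ∧
          ((Finset.range M).filter fun i => γ s k i = 1).card = M / 2) ∧
      treemd M S A ≤
        2 * ∑ x ∈ Finset.Icc 1 (M ^ S),
          A x * ∑ s ∈ Finset.Icc 1 S,
            γ s ((x - 1) / M ^ s) (((x - 1) / M ^ (s - 1)) % M) := by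
  have hM₀ : 0 < M := by omega
  choose T hTsub hTcard hTdom using fun s k => exists_subset_card_eq_dominating (range M)
    (subintervalSum M A s (k * M ^ s)) (k := M / 2) (by simp [Nat.div_le_self])
  have hT2 : ∀ s k, 2 * #(T s k) = M := fun s k => by
    rw [hTcard]; exact Nat.two_mul_div_two_of_even hEven
  refine ⟨fun s k i => if i ∈ T s k then 1 else -1, fun s _ k _ => ⟨fun i _ => ?_, ?_⟩, ?_⟩
  · by_cases hi : i ∈ T s k <;> simp [hi]
  · rw [filter_sign_eq_one _ (hTsub s k), hTcard]
  · calc treemd M S A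
        ≤ ∑ s ∈ Icc 1 S, ∑ k ∈ range (M ^ (S - s)), 2 * ∑ i ∈ range M,
            (if i ∈ T s k then 1 else -1) * subintervalSum M A s (k * M ^ s) i :=
          sum_le_sum fun s hs => sum_le_sum fun k _ => mdAt_le_two_mul_sum_sign_mul A hM₀
            (mem_Icc.mp hs).1 _ (hTsub s k) (hT2 s k) (hTdom s k)
      _ = 2 * ∑ s ∈ Icc 1 S, ∑ x ∈ Icc 1 (M ^ S),
            A x * if (x - 1) / M ^ (s - 1) % M ∈ T s ((x - 1) / M ^ s) then 1 else -1 := by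
          simp_rw [← mul_sum]
          congr 1
          exact sum_congr rfl fun s hs => sum_sum_mul_subintervalSum A hM₀ (mem_Icc.mp hs).1
            (mem_Icc.mp hs).2 fun k i => if i ∈ T s k then 1 else -1
      _ = _ := by
          rw [sum_comm]
          simp_rw [mul_sum]

/-- For even `M ≥ 2`, `S ≥ 1`, `n = M^S`, and any real sequence `A`, there
is a balanced sign family: a choice `γ s k : {0,…,M−1} → {−1,+1}` for every scale
`s ∈ {1,…,S}` and every scale-`s` interval `(k·M^s, (k+1)·M^s]` (with exactly `M/2`
coordinates equal to `+1`), such that `treemd_{M,S}(A) ≤ 2·∑_{x=1}^{n} a_x·g_x`, where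
`g_x = ∑_{s=1}^{S} g_{x,s}` and `g_{x,s} = γ s ((x−1)/M^s) (((x−1)/M^{s−1}) mod M)` is the
sign assigned to the sub-interval containing `x` by the scale-`s` interval containing `x`. -/
theorem stmt10 (M S : ℕ) (hM : 2 ≤ M) (hEven : Even M) (hS : 1 ≤ S) (A : ℕ → ℝ) :
    ∃ γ : ℕ → ℕ → ℕ → ℝ,
      (∀ s ∈ Finset.Icc 1 S, ∀ k ∈ Finset.range (M ^ (S - s)),
        (∀ i ∈ Finset.range M, γ s k i = 1 ∨ γ s k i = -1) ∧
          ((Finset.range M).filter fun i => γ s k i = 1).card = M / 2) ∧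
      treemd M S A ≤
        2 * ∑ x ∈ Finset.Icc 1 (M ^ S),
          A x * ∑ s ∈ Finset.Icc 1 S,
            γ s ((x - 1) / M ^ s) (((x - 1) / M ^ (s - 1)) % M) :=
  stmt10_general M S hM hEven A
end

section
/- Let M ≥ 2 be an even integer, S ≥ 1 an integer, and n = M^S. For every balanced sign family (γ_I)_I and every sign pattern σ ∈ {−1, +1}^S, the number of indices x ∈ {1, …, n} such that g_{x,s} = σ_s for all s ∈ {1, …, S} is exactly (M/2)^S. In particular, for a uniformly random index x, the random variables g_{x,1}, …, g_{x,S} are independent and each is uniform on {−1, +1}. -/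
/-!
Write `y = x - 1` in base `M`. The scale-`s` interval containing `x` is indexed by the digits of
`y` above position `s`, and the sub-interval by the digit at position `s - 1`. Splitting off the
lowest digit, the scale-`1` constraint is a condition on that digit alone, met by exactly `M / 2`
of its values whatever the higher digits are, while the remaining constraints form an instance
of the same problem with one scale fewer. Induction on the number of scales gives `(M / 2) ^ S`.
-/

attribute [local instance] Classical.propDecidable

open Finset

theorem sum_range_mul_eq_sum_sum {β : Type*} [AddCommMonoid β] (f : ℕ → β) (M N : ℕ) :
    ∑ y ∈ range (N * M), f y = ∑ q ∈ range N, ∑ i ∈ range M, f (M * q + i) := by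
  induction N with
  | zero => simp
  | succ N ih => rw [Nat.succ_mul, sum_range_add, ih, sum_range_succ, mul_comm N]

theorem card_filter_range_mul (p : ℕ → Prop) [DecidablePred p] (M N : ℕ) :
    #{y ∈ range (N * M) | p y} = ∑ q ∈ range N, #{i ∈ range M | p (M * q + i)} := by
  simp only [card_filter, sum_range_mul_eq_sum_sum]

theorem mul_add_div_pow_succ {M i : ℕ} (hi : i < M) (q s : ℕ) :
    (M * q + i) / M ^ (s + 1) = q / M ^ s := by
  rw [pow_succ', ← Nat.div_div_eq_div_mul, Nat.mul_add_div (by omega), Nat.div_eq_of_lt hi,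
    add_zero]

theorem forall_mem_Icc_one_succ (p : ℕ → Prop) (S : ℕ) :
    (∀ s ∈ Icc 1 (S + 1), p s) ↔ p 1 ∧ ∀ s ∈ Icc 1 S, p (s + 1) := by
  simp only [mem_Icc]
  constructor
  · intro h
    exact ⟨h 1 (by omega), fun s hs => h (s + 1) (by omega)⟩
  · rintro ⟨h1, h⟩ (_ | _ | s) hs
    · omega
    · exact h1
    · exact h (s + 1) (by omega)

theorem card_filter_forall_digit (M : ℕ) (P : ℕ → ℕ → ℕ → Prop) (c : ℕ → ℕ) (S : ℕ)
    (hP : ∀ s ∈ Icc 1 S, ∀ k ∈ range (M ^ (S - s)), #{i ∈ range M | P s k i} = c s) :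
    #{y ∈ range (M ^ S) | ∀ s ∈ Icc 1 S, P s (y / M ^ s) (y / M ^ (s - 1) % M)} =
      ∏ s ∈ range S, c (s + 1) := by
  induction S generalizing P c with
  | zero => simp
  | succ S ih =>
    set Q : ℕ → Prop := fun q => ∀ s ∈ Icc 1 S, P (s + 1) (q / M ^ s) (q / M ^ (s - 1) % M)
    have hlow : ∀ q ∈ range (M ^ S), #{i ∈ range M | P 1 q i} = c 1 := fun q hq =>
      hP 1 (by simp) q (by simpa using hq)
    have hhigh : #{q ∈ range (M ^ S) | Q q} = ∏ s ∈ range S, c (s + 1 + 1) :=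
      ih (fun s => P (s + 1)) (fun s => c (s + 1)) fun s hs k hk =>
        hP (s + 1) (by simp only [mem_Icc] at hs ⊢; omega) k (by simpa using hk)
    have hsplit : ∀ q, ∀ i < M,
        (∀ s ∈ Icc 1 (S + 1), P s ((M * q + i) / M ^ s) ((M * q + i) / M ^ (s - 1) % M)) ↔
          P 1 q i ∧ Q q := by
      intro q i hi
      rw [forall_mem_Icc_one_succ]
      refine and_congr ?_ (forall₂_congr fun s hs => ?_)
      · have hdiv : (M * q + i) / M ^ 1 = q := by simpa using mul_add_div_pow_succ hi q 0
        rw [Nat.sub_self, pow_zero, Nat.div_one, hdiv, Nat.mul_add_mod, Nat.mod_eq_of_lt hi]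
      · obtain ⟨t, rfl⟩ : ∃ t, s = t + 1 := ⟨s - 1, by simp only [mem_Icc] at hs; omega⟩
        simp only [Nat.add_sub_cancel, mul_add_div_pow_succ hi]
    calc _ = ∑ q ∈ range (M ^ S), #{i ∈ range M | P 1 q i ∧ Q q} := by
          rw [pow_succ, card_filter_range_mul]
          exact sum_congr rfl fun q _ =>
            congrArg card (filter_congr fun i hi => hsplit q i (mem_range.mp hi))
      _ = ∑ q ∈ range (M ^ S), if Q q then c 1 else 0 := by
          refine sum_congr rfl fun q hq => ?_
          by_cases hq' : Q q <;> simp [hq', hlow q hq]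
      _ = ∏ s ∈ range (S + 1), c (s + 1) := by
          rw [← sum_filter, sum_const, smul_eq_mul, hhigh, prod_range_succ']

theorem card_filter_eq_half_of_balanced {M : ℕ} (hM : Even M) {f : ℕ → ℝ}
    (hf : ∀ i ∈ range M, f i = 1 ∨ f i = -1) (hbal : #{i ∈ range M | f i = 1} = M / 2)
    {t : ℝ} (ht : t = 1 ∨ t = -1) : #{i ∈ range M | f i = t} = M / 2 := by
  rcases ht with rfl | rfl
  · exact hbal
  · have hcompl : {i ∈ range M | f i = -1} = {i ∈ range M | ¬f i = 1} :=
      filter_congr fun i hi => by rcases hf i hi with h | h <;> norm_num [h]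
    have hsum := card_filter_add_card_filter_not (s := range M) (fun i => f i = 1)
    rw [card_range, hbal, ← hcompl] at hsum
    obtain ⟨r, rfl⟩ := hM
    omega

theorem stmt11_general (M S : ℕ) (hEven : Even M)
    (γ : ℕ → ℕ → ℕ → ℝ)
    (hγ : ∀ s ∈ Finset.Icc 1 S, ∀ k ∈ Finset.range (M ^ (S - s)),
      (∀ i ∈ Finset.range M, γ s k i = 1 ∨ γ s k i = -1) ∧
        ((Finset.range M).filter fun i => γ s k i = 1).card = M / 2)
    (σ : ℕ → ℝ) (hσ : ∀ s ∈ Finset.Icc 1 S, σ s = 1 ∨ σ s = -1) :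
    ((Finset.Icc 1 (M ^ S)).filter fun x =>
        ∀ s ∈ Finset.Icc 1 S,
          γ s ((x - 1) / M ^ s) (((x - 1) / M ^ (s - 1)) % M) = σ s).card =
      (M / 2) ^ S := by
  have hshift : Icc 1 (M ^ S) = (range (M ^ S)).map (addRightEmbedding 1) := by
    ext x
    simp only [mem_Icc, mem_map, mem_range, addRightEmbedding_apply]
    constructor
    · exact fun hx => ⟨x - 1, by omega, by omega⟩
    · rintro ⟨y, hy, rfl⟩
      omega
  have hdigit := card_filter_forall_digit M (fun s k i => γ s k i = σ s) (fun _ => M / 2) S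
    fun s hs k hk =>
      card_filter_eq_half_of_balanced hEven (hγ s hs k hk).1 (hγ s hs k hk).2 (hσ s hs)
  rw [prod_const, card_range] at hdigit
  rw [← hdigit, hshift]
  simp only [filter_map, card_map, Function.comp_def, addRightEmbedding_apply, Nat.add_sub_cancel]

/-- For even `M ≥ 2`, `S ≥ 1`, `n = M^S`: for every balanced sign family
`γ` (assigning to each scale-`s` interval, `s ∈ {1,…,S}`, a vector in `{−1,+1}^M` with
exactly `M/2` coordinates `+1`) and every sign pattern `σ ∈ {−1,+1}^S`, the number of indices
`x ∈ {1,…,n}` with `g_{x,s} = σ_s` for all `s ∈ {1,…,S}` is exactly `(M/2)^S`. Here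
`g_{x,s} = γ s ((x−1)/M^s) (((x−1)/M^{s−1}) mod M)` is the sign the scale-`s` interval
containing `x` assigns to the sub-interval containing `x`. -/
theorem stmt11 (M S : ℕ) (hM : 2 ≤ M) (hEven : Even M) (hS : 1 ≤ S)
    (γ : ℕ → ℕ → ℕ → ℝ)
    (hγ : ∀ s ∈ Finset.Icc 1 S, ∀ k ∈ Finset.range (M ^ (S - s)),
      (∀ i ∈ Finset.range M, γ s k i = 1 ∨ γ s k i = -1) ∧
        ((Finset.range M).filter fun i => γ s k i = 1).card = M / 2)
    (σ : ℕ → ℝ) (hσ : ∀ s ∈ Finset.Icc 1 S, σ s = 1 ∨ σ s = -1) :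
    ((Finset.Icc 1 (M ^ S)).filter fun x =>
        ∀ s ∈ Finset.Icc 1 S,
          γ s ((x - 1) / M ^ s) (((x - 1) / M ^ (s - 1)) % M) = σ s).card =
      (M / 2) ^ S :=
  stmt11_general M S hEven γ hγ σ hσ
end

section
/- Let M ≥ 2 and S ≥ 3 be integers and n = M^S. Then: (a) for every scale s ∈ {3, …, S}, the number of indices x ∈ {1, …, n} that are scale-s hitters is exactly 2n/M²; and (b) for every set T ⊆ {3, …, S} all of whose elements are multiples of 3, the number of indices x ∈ {1, …, n} that are scale-s hitters simultaneously for every s ∈ T equals n·(2/M²)^{|T|}. In particular, for a uniformly random x, the hitting events at scales that are distinct multiples of 3 are mutually independent, each of probability 2/M². -/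
attribute [local instance] Classical.propDecidable

/-- `x` is a scale-`s` hitter: letting `(l, l+M^s]` be the scale-`s` interval containing `x`
(so `l = ((x−1)/M^s)·M^s`) with anchors `m_i = l + i·M^{s−1}` for `0 ≤ i ≤ M`, there is an
anchor with `m_i − M^{s−3} < x ≤ m_i + M^{s−3}` (as integers). -/
def IsHitter (M s x : ℕ) : Prop :=
  ∃ i ≤ M,
    ((((x - 1) / M ^ s) * M ^ s + i * M ^ (s - 1) : ℕ) : ℤ) - (M : ℤ) ^ (s - 3) < (x : ℤ) ∧
      (x : ℤ) ≤ (((x - 1) / M ^ s) * M ^ s + i * M ^ (s - 1) : ℕ) + (M : ℤ) ^ (s - 3)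

/-! Write `x = y + 1`. The anchors of the scale-`s` interval are the multiples of `M^(s-1)`
inside it, so `x` is a scale-`s` hitter exactly when `y / M^(s-3)` is `≡ 0` or `≡ -1` modulo
`M²`, i.e. when the two base-`M` digits of `y` at positions `s - 3` and `s - 2` are both `0` or
both `M - 1`. Scales that are at least two apart (in particular distinct multiples of 3) look at
disjoint pairs of digits, and the digits of `y < M^S` vary independently, so the counts
multiply. -/

open Finset

theorem card_filter_Icc_one (n : ℕ) (P : ℕ → Prop) [DecidablePred P] :
    #((Icc 1 n).filter P) = #((range n).filter fun y => P (y + 1)) := by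
  rw [← Ico_add_one_right_eq_Icc, range_eq_Ico, ← zero_add 1, ← map_add_right_Ico, filter_map,
    card_map]
  rfl

theorem card_filter_range_mul_s13 (p t : ℕ) (P Q : ℕ → Prop) [DecidablePred P] [DecidablePred Q] :
    #((range (p * t)).filter fun y => P (y % p) ∧ Q (y / p)) =
      #((range p).filter P) * #((range t).filter Q) := by
  rcases Nat.eq_zero_or_pos p with rfl | hp
  · simp
  rw [← card_product]
  refine card_nbij' (fun y => (y % p, y / p)) (fun z => z.1 + p * z.2) ?_ ?_ ?_ ?_
  · intro y hy
    simp only [coe_filter, mem_range, Set.mem_ofPred_eq, coe_product, Set.mem_prod] at hy ⊢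
    exact ⟨⟨Nat.mod_lt _ hp, hy.2.1⟩, Nat.div_lt_of_lt_mul hy.1, hy.2.2⟩
  · rintro ⟨a, b⟩ hab
    simp only [coe_filter, mem_range, Set.mem_ofPred_eq, coe_product, Set.mem_prod] at hab ⊢
    obtain ⟨ha, hb⟩ := hab
    rw [Nat.add_mul_mod_self_left, Nat.mod_eq_of_lt ha.1, Nat.add_mul_div_left _ _ hp,
      Nat.div_eq_of_lt ha.1, zero_add]
    refine ⟨?_, ha.2, hb.2⟩
    nlinarith
  · intro y _
    exact Nat.mod_add_div y p
  · rintro ⟨a, b⟩ hab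
    simp only [coe_filter, mem_range, Set.mem_ofPred_eq, coe_product, Set.mem_prod] at hab
    obtain ⟨ha, -⟩ := hab
    simp only [Nat.add_mul_mod_self_left, Nat.mod_eq_of_lt ha.1, Nat.add_mul_div_left _ _ hp,
      Nat.div_eq_of_lt ha.1, zero_add]

theorem card_filter_range_mul_mod (p t : ℕ) (P : ℕ → Prop) [DecidablePred P] :
    #((range (p * t)).filter fun y => P (y % p)) = #((range p).filter P) * t := by
  simpa using card_filter_range_mul_s13 p t P (fun _ => True)

theorem mod_pow_div_pow_mod_pow (M y d e w : ℕ) (h : e + w ≤ d) :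
    y % M ^ d / M ^ e % M ^ w = y / M ^ e % M ^ w := by
  rw [← Nat.mod_mul_right_div_self, ← Nat.mod_mul_right_div_self, ← pow_add,
    Nat.mod_mod_of_dvd _ (pow_dvd_pow M h)]

theorem Nat.exists_le_mul_le_add_one_iff_mod {k N M : ℕ} (hk : k < N * M) :
    (∃ i ≤ M, k ≤ i * N ∧ i * N ≤ k + 1) ↔ k % N = 0 ∨ k % N = N - 1 := by
  have hN : 0 < N := Nat.pos_of_ne_zero (by rintro rfl; simp at hk)
  have hdiv : k / N < M := (Nat.div_lt_iff_lt_mul hN).2 (by rwa [mul_comm])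
  have hdm := Nat.div_add_mod' k N
  constructor
  · rintro ⟨i, -, hlo, hhi⟩
    rcases hlo.eq_or_lt with heq | hlt
    · left
      rw [heq, Nat.mul_mod_left]
    · obtain ⟨j, rfl⟩ : ∃ j, i = j + 1 := Nat.exists_eq_add_one.2 (Nat.pos_of_ne_zero (by
        rintro rfl; omega))
      right
      have : k = N * j + (N - 1) := by rw [add_one_mul] at hhi hlt; rw [mul_comm]; omega
      rw [this, Nat.mul_add_mod, Nat.mod_eq_of_lt (by omega)]
  · rintro (h | h)
    · exact ⟨k / N, hdiv.le, by rw [h] at hdm; omega, by omega⟩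
    · exact ⟨k / N + 1, hdiv, by rw [add_one_mul]; omega, by rw [add_one_mul]; omega⟩

theorem mul_card_le_of_separated (w : ℕ) (D : Finset ℕ) {R : ℕ} (hDR : ∀ d ∈ D, d + w ≤ R)
    (hD : ∀ d ∈ D, ∀ e ∈ D, e < d → e + w ≤ d) : w * #D ≤ R := by
  induction D using Finset.induction_on_max generalizing R with
  | empty => simp
  | insert a D hlt ih =>
    have ha : a + w ≤ R := hDR a (mem_insert_self a D)
    have hDa : w * #D ≤ a := ih (fun e he => hD a (mem_insert_self a D) e
      (mem_insert_of_mem he) (hlt e he))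
      (fun d hd e he => hD d (mem_insert_of_mem hd) e (mem_insert_of_mem he))
    rw [card_insert_of_notMem fun h => (hlt a h).false, mul_add_one]
    omega

theorem card_filter_range_pow_forall_digits (M w : ℕ) (P : ℕ → Prop) [DecidablePred P]
    (D : Finset ℕ) {R : ℕ} (hDR : ∀ d ∈ D, d + w ≤ R)
    (hD : ∀ d ∈ D, ∀ e ∈ D, e < d → e + w ≤ d) :
    #((range (M ^ R)).filter fun y => ∀ d ∈ D, P (y / M ^ d % M ^ w)) =
      #((range (M ^ w)).filter P) ^ #D * M ^ (R - w * #D) := by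
  induction D using Finset.induction_on_max generalizing R with
  | empty => simp
  | insert a D hlt ih =>
    have ha : a + w ≤ R := hDR a (mem_insert_self a D)
    have hDa : ∀ e ∈ D, e + w ≤ a := fun e he =>
      hD a (mem_insert_self a D) e (mem_insert_of_mem he) (hlt e he)
    have hD' : ∀ d ∈ D, ∀ e ∈ D, e < d → e + w ≤ d := fun d hd e he =>
      hD d (mem_insert_of_mem hd) e (mem_insert_of_mem he)
    have hcard : w * #D ≤ a := mul_card_le_of_separated w D hDa hD'
    have hsplit : M ^ R = M ^ a * (M ^ w * M ^ (R - a - w)) := by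
      rw [← pow_add, ← pow_add]; congr 1; omega
    calc #((range (M ^ R)).filter fun y => ∀ d ∈ insert a D, P (y / M ^ d % M ^ w))
        = #((range (M ^ a * (M ^ w * M ^ (R - a - w)))).filter fun y =>
            (∀ e ∈ D, P (y % M ^ a / M ^ e % M ^ w)) ∧ P (y / M ^ a % M ^ w)) := by
          rw [hsplit]
          congr 1
          refine filter_congr fun y _ => ?_
          rw [forall_mem_insert, and_comm]
          refine and_congr_left fun _ => forall₂_congr fun e he => ?_
          rw [mod_pow_div_pow_mod_pow M y a e w (hDa e he)]
      _ = #((range (M ^ w)).filter P) ^ #D * M ^ (a - w * #D) *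
            (#((range (M ^ w)).filter P) * M ^ (R - a - w)) := by
          rw [card_filter_range_mul_s13 _ _ (fun z => ∀ e ∈ D, P (z / M ^ e % M ^ w))
            (fun b => P (b % M ^ w)), ih hDa hD', card_filter_range_mul_mod]
      _ = #((range (M ^ w)).filter P) ^ #(insert a D) * M ^ (R - w * #(insert a D)) := by
          rw [card_insert_of_notMem fun h => (hlt a h).false,
            show R - w * (#D + 1) = (a - w * #D) + (R - a - w) by rw [mul_add_one]; omega,
            pow_add, pow_succ]
          ring

theorem isHitter_succ_iff {M s : ℕ} (hM : 0 < M) (hs : 3 ≤ s) (y : ℕ) :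
    IsHitter M s (y + 1) ↔ y / M ^ (s - 3) % M ^ 2 = 0 ∨ y / M ^ (s - 3) % M ^ 2 = M ^ 2 - 1 := by
  set q := M ^ (s - 3)
  have hq : 0 < q := by positivity
  have hs1 : M ^ (s - 1) = M ^ 2 * q := by rw [← pow_add]; congr 1; omega
  have hs0 : M ^ s = q * (M ^ 2 * M) := by rw [← pow_succ, ← pow_add]; congr 1; omega
  have hr : y % M ^ s / q < M ^ 2 * M :=
    Nat.div_lt_of_lt_mul (hs0 ▸ Nat.mod_lt y (by positivity))
  unfold IsHitter
  rw [Nat.add_sub_cancel]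
  -- in units of `q`, the offset `y % M^s` lies in the `i`-th window iff its integer part is
  -- `i * M^2` or `i * M^2 - 1`
  trans ∃ i ≤ M, y % M ^ s / q ≤ i * M ^ 2 ∧ i * M ^ 2 ≤ y % M ^ s / q + 1
  · refine exists_congr fun i => and_congr_right fun _ => ?_
    have hy := Nat.div_add_mod' y (M ^ s)
    have hqz : (M : ℤ) ^ (s - 3) = q := (Nat.cast_pow M _).symm
    rw [hqz, ← Nat.lt_succ_iff, Nat.div_lt_iff_lt_mul hq,
      ← Nat.add_div_right _ hq, Nat.le_div_iff_mul_le hq, Nat.succ_mul, hs1, ← mul_assoc]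
    generalize y / M ^ s * M ^ s = L at hy ⊢
    generalize i * M ^ 2 * q = B
    generalize y % M ^ s = r at hy ⊢
    push_cast
    omega
  · rw [Nat.exists_le_mul_le_add_one_iff_mod hr, hs0, Nat.mod_mul_right_div_self,
      Nat.mod_mul_right_mod]

theorem card_filter_forall_isHitter {M : ℕ} (hM : 2 ≤ M) (S : ℕ) (T : Finset ℕ)
    (hT3 : ∀ s ∈ T, 3 ≤ s) (hTS : ∀ s ∈ T, s ≤ S + 1)
    (hT : ∀ s ∈ T, ∀ t ∈ T, t < s → t + 2 ≤ s) :
    #((Icc 1 (M ^ S)).filter fun x => ∀ s ∈ T, IsHitter M s x) = 2 ^ #T * M ^ (S - 2 * #T) := by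
  have hM2 : 2 ≤ M ^ 2 := hM.trans (Nat.le_self_pow two_ne_zero M)
  have hends : #((range (M ^ 2)).filter fun v => v = 0 ∨ v = M ^ 2 - 1) = 2 := by
    have hpair : (range (M ^ 2)).filter (fun v => v = 0 ∨ v = M ^ 2 - 1) = {0, M ^ 2 - 1} := by
      ext v
      simp only [mem_filter, mem_range, mem_insert, mem_singleton]
      omega
    rw [hpair, card_pair (by omega)]
  have hinj : Set.InjOn (· - 3) (T : Set ℕ) := fun s hs t ht hst => by
    have := hT3 s hs; have := hT3 t ht; simp only at hst; omega
  have hcount := card_filter_range_pow_forall_digits M 2 (fun v => v = 0 ∨ v = M ^ 2 - 1)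
    (T.image (· - 3)) (R := S)
    (by simp only [mem_image]; rintro _ ⟨s, hs, rfl⟩; have := hT3 s hs; have := hTS s hs; omega)
    (by
      simp only [mem_image]
      rintro _ ⟨s, hs, rfl⟩ _ ⟨t, ht, rfl⟩ hts
      have := hT3 s hs; have := hT3 t ht; have := hT s hs t ht (by omega); omega)
  rw [hends, card_image_of_injOn hinj] at hcount
  rw [card_filter_Icc_one, ← hcount]
  congr 1
  refine filter_congr fun y _ => ?_
  rw [forall_mem_image]
  exact forall₂_congr fun s hs => isHitter_succ_iff (by omega) (hT3 s hs) y

theorem stmt13_general (M S : ℕ) (hM : 2 ≤ M) :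
    (∀ s ∈ Finset.Icc 3 S,
      ((Finset.Icc 1 (M ^ S)).filter fun x => IsHitter M s x).card = 2 * M ^ (S - 2)) ∧
    (∀ T : Finset ℕ, T ⊆ Finset.Icc 3 S → (∀ s ∈ T, 3 ∣ s) →
      ((Finset.Icc 1 (M ^ S)).filter fun x => ∀ s ∈ T, IsHitter M s x).card =
        2 ^ T.card * M ^ (S - 2 * T.card)) := by
  refine ⟨fun s hs => ?_, fun T hTS hT3 => ?_⟩
  · rw [mem_Icc] at hs
    simpa using card_filter_forall_isHitter hM S {s} (by simpa using hs.1)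
      (by simp only [mem_singleton, forall_eq]; omega)
      (by simp)
  · have hT : ∀ s ∈ T, 3 ≤ s ∧ s ≤ S := fun s hs => mem_Icc.1 (hTS hs)
    refine card_filter_forall_isHitter hM S T (fun s hs => (hT s hs).1)
      (fun s hs => by have := hT s hs; omega) fun s hs t ht hts => ?_
    have := hT3 s hs; have := hT3 t ht
    omega

/-- For `M ≥ 2`, `S ≥ 3`, `n = M^S`:
(a) for every scale `s ∈ {3,…,S}`, the number of `x ∈ {1,…,n}` that are scale-`s` hitters is
exactly `2n/M² = 2·M^{S−2}`; and
(b) for every set `T ⊆ {3,…,S}` of multiples of 3, the number of `x ∈ {1,…,n}` that are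
scale-`s` hitters for every `s ∈ T` is exactly `n·(2/M²)^{|T|} = 2^{|T|}·M^{S−2|T|}`. -/
theorem stmt13 (M S : ℕ) (hM : 2 ≤ M) (hS : 3 ≤ S) :
    (∀ s ∈ Finset.Icc 3 S,
      ((Finset.Icc 1 (M ^ S)).filter fun x => IsHitter M s x).card = 2 * M ^ (S - 2)) ∧
    (∀ T : Finset ℕ, T ⊆ Finset.Icc 3 S → (∀ s ∈ T, 3 ∣ s) →
      ((Finset.Icc 1 (M ^ S)).filter fun x => ∀ s ∈ T, IsHitter M s x).card =
        2 ^ T.card * M ^ (S - 2 * T.card)) :=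
  stmt13_general M S hM
end

section
/- Let M ≥ 2 and S ≥ 3 be integers with S a multiple of 3 and M² ≥ S^{17/100}, and let n = M^S. Then the number of indices x ∈ {1, …, n} for which the number of scales s ∈ {3, …, S} with s a multiple of 3 such that x is a scale-s hitter exceeds S^{83/100} is at most n·exp(−S^{66/100}/2). -/
/-!
Write `x - 1` in base `M³` with `k = S / 3` digits. If `x` is a scale-`3j` hitter, then `x - 1`
lies within `M^(3j-3)` of a multiple of `M^(3j-1)`, so its `(j-1)`-th digit is `≡ 0` or `≡ -1`
modulo `M²`, which only `2M` of the `M³` digit values are. Weighting each `x` by `2` to the number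
of such digits (an exponential Markov inequality) gives
`#{frequent hitters} · 2^t ≤ (M³ + 2M)^k = M^S (1 + 2/M²)^k` with `t = S^{83/100}`. With
`u = S^{17/100} ≤ M²` and `log y ≤ (y - y⁻¹)/2`, the remaining inequality
`(1 + 2/M²)^k ≤ exp(-S^{66/100}/2) · 2^t` becomes elementary in `u`.
-/

attribute [local instance] Classical.propDecidable

open Finset Real

def IsNearMultiple (N a : ℕ) : Prop := a ≡ 0 [MOD N] ∨ a ≡ N - 1 [MOD N]

lemma isNearMultiple_mod_iff {N L a : ℕ} (h : N ∣ L) :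
    IsNearMultiple N (a % L) ↔ IsNearMultiple N a := by
  have ha : a % L ≡ a [MOD N] := (Nat.mod_modEq a L).of_dvd h
  exact or_congr ⟨ha.symm.trans, ha.trans⟩ ⟨ha.symm.trans, ha.trans⟩

lemma isNearMultiple_div_of_le_of_lt {N A y j : ℕ} (hA : 0 < A) (h₁ : A * (N * j) ≤ y + A)
    (h₂ : y < A * (N * j) + A) : IsNearMultiple N (y / A) := by
  have hlt : y / A < N * j + 1 := (Nat.div_lt_iff_lt_mul hA).2 (by linarith)
  have hge : N * j ≤ y / A + 1 := by
    rw [← Nat.add_div_right y hA, Nat.le_div_iff_mul_le hA]; linarith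
  rcases (by omega : y / A = N * j ∨ y / A + 1 = N * j) with h | h
  · exact Or.inl (Nat.modEq_zero_iff_dvd.2 ⟨j, h⟩)
  · have hN : 0 < N := Nat.pos_of_ne_zero (by rintro rfl; simp at h)
    refine Or.inr (Nat.ModEq.add_right_cancel' 1 ?_)
    rw [h, Nat.sub_add_cancel hN]
    simp [Nat.ModEq]

lemma card_filter_isNearMultiple {N L : ℕ} (hN : 2 ≤ N) (hNL : N ∣ L) :
    #{a : Fin L | IsNearMultiple N a} = 2 * (L / N) := by
  obtain ⟨M, rfl⟩ := hNL
  rw [Nat.mul_div_cancel_left M (by omega)]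
  have hcount (v : ℕ) : #{a ∈ range (N * M) | a ≡ v [MOD N]} = M := by
    rw [← Nat.count_eq_card_filter_range, Nat.count_modEq_card _ (by omega)]
    simp [Nat.mul_mod_right, Nat.mul_div_cancel_left M (by omega : 0 < N)]
  have hdisj : Disjoint {a ∈ range (N * M) | a ≡ 0 [MOD N]}
      {a ∈ range (N * M) | a ≡ N - 1 [MOD N]} := by
    refine disjoint_filter.2 fun a _ h0 h1 => ?_
    have : 0 = N - 1 := by
      simpa [Nat.ModEq, Nat.mod_eq_of_lt (by omega : N - 1 < N)] using h0.symm.trans h1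
    omega
  have hval : ({a : Fin (N * M) | IsNearMultiple N a} : Finset _).map Fin.valEmbedding =
      {a ∈ range (N * M) | IsNearMultiple N a} := by
    ext a
    simp only [mem_map, mem_filter, mem_univ, true_and, mem_range,
      Fin.valEmbedding_apply]
    exact ⟨fun ⟨b, hb, hba⟩ => hba ▸ ⟨b.isLt, hb⟩, fun ⟨ha, h⟩ => ⟨⟨a, ha⟩, h, rfl⟩⟩
  rw [← card_map Fin.valEmbedding, hval]
  have hor : {a ∈ range (N * M) | IsNearMultiple N a} =
      {a ∈ range (N * M) | a ≡ 0 [MOD N]} ∪ {a ∈ range (N * M) | a ≡ N - 1 [MOD N]} := by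
    ext a; rw [mem_union, mem_filter, mem_filter, mem_filter, IsNearMultiple, and_or_left]
  rw [hor, card_union_of_disjoint hdisj, hcount, hcount, two_mul]

lemma IsHitter.isNearMultiple {M s y : ℕ} (hM : 0 < M) (hs : 3 ≤ s)
    (h : IsHitter M s (y + 1)) : IsNearMultiple (M ^ 2) (y / M ^ (s - 3)) := by
  obtain ⟨i, -, h₁, h₂⟩ := h
  rw [Nat.add_sub_cancel] at h₁ h₂
  set A := M ^ (s - 3)
  set c := y / M ^ s
  have hanchor : c * M ^ s + i * M ^ (s - 1) = A * (M ^ 2 * (c * M + i)) := by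
    have hs₁ : M ^ (s - 1) = A * M ^ 2 := by rw [← pow_add]; congr 1; omega
    have hs₀ : M ^ s = A * M ^ 2 * M := by rw [← pow_add, ← pow_succ]; congr 1; omega
    rw [hs₀, hs₁]; ring
  have hAz : (M : ℤ) ^ (s - 3) = (A : ℤ) := (Nat.cast_pow M (s - 3)).symm
  rw [hanchor, hAz] at h₁ h₂
  exact isNearMultiple_div_of_le_of_lt (j := c * M + i) (pow_pos hM _) (by omega) (by omega)

lemma card_filter_isHitter_le {M k y : ℕ} (hM : 0 < M) :
    #{s ∈ Icc 3 (3 * k) | 3 ∣ s ∧ IsHitter M s (y + 1)} ≤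
      #{j : Fin k | IsNearMultiple (M ^ 2) (y / (M ^ 3) ^ (j : ℕ) % M ^ 3)} := by
  refine (card_le_card fun s hs => ?_).trans
    (card_image_le (f := fun j : Fin k => 3 * ((j : ℕ) + 1)))
  obtain ⟨hs, ⟨r, rfl⟩, hhit⟩ := mem_filter.1 hs
  rw [mem_Icc] at hs
  refine mem_image.2 ⟨⟨r - 1, by omega⟩, mem_filter.2 ⟨mem_univ _, ?_⟩, by dsimp only; omega⟩
  rw [isNearMultiple_mod_iff (pow_dvd_pow M (by norm_num)), ← pow_mul]
  convert hhit.isNearMultiple hM hs.1 using 3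
  dsimp only; omega

lemma card_filter_Icc_le_card_filter_digits {N k : ℕ} (R : ℕ → Prop)
    (Q : (Fin k → Fin N) → Prop)
    (h : ∀ f, R ((finFunctionFinEquiv f : ℕ) + 1) → Q f) :
    #{x ∈ Icc 1 (N ^ k) | R x} ≤ #{f | Q f} := by
  refine (card_le_card fun x hx => ?_).trans
    (card_image_le (f := fun f => (finFunctionFinEquiv f : ℕ) + 1))
  obtain ⟨hx, hR⟩ := mem_filter.1 hx
  rw [mem_Icc] at hx
  set f : Fin k → Fin N := finFunctionFinEquiv.symm ⟨x - 1, by omega⟩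
  have hf : (finFunctionFinEquiv f : ℕ) + 1 = x := by simp only [f, Equiv.apply_symm_apply]; omega
  exact mem_image.2 ⟨f, mem_filter.2 ⟨mem_univ _, h f (hf ▸ hR)⟩, hf⟩

lemma card_filter_lt_card_filter_mul_rpow_le {ι α : Type*} [Fintype ι] [DecidableEq ι]
    [Fintype α] (P : α → Prop) {b : ℝ} (hb : 1 ≤ b) (t : ℝ) :
    (#{f : ι → α | t < #{i | P (f i)}} : ℝ) * b ^ t ≤
      (Fintype.card α + (b - 1) * #{a | P a}) ^ Fintype.card ι := by
  calc (#{f : ι → α | t < #{i | P (f i)}} : ℝ) * b ^ t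
      = ∑ f : ι → α with t < #{i | P (f i)}, b ^ t := by rw [sum_const, nsmul_eq_mul]
    _ ≤ ∑ f : ι → α with t < #{i | P (f i)}, b ^ #{i | P (f i)} := by
        refine sum_le_sum fun f hf => ?_
        rw [← rpow_natCast]
        exact rpow_le_rpow_of_exponent_le hb (mem_filter.1 hf).2.le
    _ ≤ ∑ f : ι → α, b ^ #{i | P (f i)} :=
        sum_le_sum_of_subset_of_nonneg (filter_subset _ _) fun _ _ _ => by positivity
    _ = ∑ f : ι → α, ∏ i, if P (f i) then b else 1 := by simp [prod_ite]
    _ = ∏ _i : ι, ∑ a, if P a then b else 1 :=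
        (Fintype.prod_sum fun _ a => if P a then b else 1).symm
    _ = (Fintype.card α + (b - 1) * #{a | P a}) ^ Fintype.card ι := by
        have hα : (Fintype.card α : ℝ) = #{a | P a} + #{a | ¬P a} := by
          rw [← Nat.cast_add, card_filter_add_card_filter_not, card_univ]
        rw [prod_const, card_univ, sum_ite, sum_const, sum_const, hα]
        simp only [nsmul_eq_mul]; ring

lemma Real.log_le_sub_inv_div_two {x : ℝ} (hx : 1 ≤ x) : log x ≤ (x - x⁻¹) / 2 := by
  rw [← sinh_log (by linarith)]
  exact self_le_sinh_iff.2 (log_nonneg hx)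

lemma log_one_add_div_three_le {u p : ℝ} (hu : 1 ≤ u) (hp : 0 ≤ p) (hp' : p ≤ 1 / 2)
    (hpu : p * u ≤ 2) : log (1 + p) / 3 ≤ log 2 / u - 1 / (2 * u ^ 2) := by
  have hlog := Real.log_le_sub_inv_div_two (by linarith : 1 ≤ 1 + p)
  have hlog2 := log_two_gt_d9
  have hu0 : 0 < u := by linarith
  have hrhs : log 2 / u - 1 / (2 * u ^ 2) = (2 * u * log 2 - 1) / (2 * u ^ 2) := by
    field_simp
  rw [hrhs, le_div_iff₀ (by positivity)]
  rcases le_or_gt u 4 with hu4 | hu4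
  · have hinv : (3 / 2 : ℝ)⁻¹ ≤ (1 + p)⁻¹ := inv_anti₀ (by linarith) (by linarith)
    nlinarith [mul_nonneg (sub_nonneg.2 hu) (sub_nonneg.2 hu4)]
  · have hp2 : p ≤ 2 / u := by rw [le_div_iff₀ hu0]; exact hpu
    have hinv : (1 + 2 / u)⁻¹ ≤ (1 + p)⁻¹ := inv_anti₀ (by linarith) (by linarith)
    have hL : log (1 + p) ≤ 2 * (u + 1) / (u * (u + 2)) := by
      have e : (1 + 2 / u - (1 + 2 / u)⁻¹) / 2 = 2 * (u + 1) / (u * (u + 2)) := by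
        field_simp; ring
      linarith
    have key : 4 * u * (u + 1) ≤ 3 * (u + 2) * (2 * u * log 2 - 1) := by nlinarith
    calc log (1 + p) / 3 * (2 * u ^ 2) ≤ 2 * (u + 1) / (u * (u + 2)) / 3 * (2 * u ^ 2) := by
          gcongr
      _ = 4 * u * (u + 1) / (3 * (u + 2)) := by field_simp; ring
      _ ≤ 2 * u * log 2 - 1 := by rw [div_le_iff₀ (by positivity)]; linarith

lemma one_add_pow_le_exp_mul_two_rpow {k : ℕ} {u p : ℝ} (hu : 1 ≤ u) (hp : 0 ≤ p)
    (hp' : p ≤ 1 / 2) (hpu : p * u ≤ 2) :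
    (1 + p) ^ k ≤ exp (-(3 * k / u ^ 2) / 2) * 2 ^ (3 * k / u) := by
  rw [← exp_log (by positivity : (0:ℝ) < (1 + p) ^ k), rpow_def_of_pos two_pos, ← exp_add,
    exp_le_exp, log_pow]
  calc k * log (1 + p) = 3 * k * (log (1 + p) / 3) := by ring
    _ ≤ 3 * k * (log 2 / u - 1 / (2 * u ^ 2)) := by
        gcongr; exact log_one_add_div_three_le hu hp hp' hpu
    _ = -(3 * k / u ^ 2) / 2 + log 2 * (3 * k / u) := by ring

lemma card_filter_lt_card_filter_isHitter_mul_rpow_le {M k : ℕ} (hM : 2 ≤ M) (t : ℝ) :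
    (#{x ∈ Icc 1 (M ^ (3 * k)) | t < #{s ∈ Icc 3 (3 * k) | 3 ∣ s ∧ IsHitter M s x}} : ℝ) *
      2 ^ t ≤ ((M : ℝ) ^ 3 + 2 * M) ^ k := by
  have hdigits := card_filter_Icc_le_card_filter_digits (N := M ^ 3) (k := k)
    (fun x => t < #{s ∈ Icc 3 (3 * k) | 3 ∣ s ∧ IsHitter M s x})
    (fun f => t < #{j | IsNearMultiple (M ^ 2) (f j)}) fun f hf => by
      refine hf.trans_le (Nat.cast_le.2 ((card_filter_isHitter_le (by omega)).trans_eq ?_))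
      congr! 3 with j
      rw [← finFunctionFinEquiv_symm_apply_val, Equiv.symm_apply_apply]
  have hmarkov := card_filter_lt_card_filter_mul_rpow_le (ι := Fin k)
    (fun a : Fin (M ^ 3) => IsNearMultiple (M ^ 2) a) one_le_two t
  rw [Fintype.card_fin, Fintype.card_fin, card_filter_isNearMultiple (by nlinarith)
    (pow_dvd_pow M (by norm_num)), Nat.pow_div (by norm_num) (by omega)] at hmarkov
  rw [← pow_mul] at hdigits
  refine le_trans ?_ (hmarkov.trans_eq ?_)
  · gcongr
  · push_cast; ring

/-- For `M ≥ 2`, `S ≥ 3` a multiple of 3 with `M² ≥ S^{17/100}`, and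
`n = M^S`: the number of indices `x ∈ {1,…,n}` that are "frequent hitters" — i.e. for which
the number of scales `s ∈ {3,…,S}` divisible by 3 such that `x` is a scale-`s` hitter
exceeds `S^{83/100}` — is at most `n·exp(−S^{66/100}/2)`. -/
theorem stmt14 (M S : ℕ) (hM : 2 ≤ M) (hS : 3 ≤ S) (hS3 : 3 ∣ S)
    (hM2 : (S : ℝ) ^ ((17 : ℝ) / 100) ≤ (M : ℝ) ^ 2) :
    (((Finset.Icc 1 (M ^ S)).filter fun x =>
        (S : ℝ) ^ ((83 : ℝ) / 100) <
          (((Finset.Icc 3 S).filter fun s => 3 ∣ s ∧ IsHitter M s x).card : ℝ)).card : ℝ) ≤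
      (M ^ S : ℝ) * Real.exp (-(S : ℝ) ^ ((66 : ℝ) / 100) / 2) := by
  obtain ⟨k, rfl⟩ := hS3
  set u := ((3 * k : ℕ) : ℝ) ^ ((17 : ℝ) / 100)
  have hS0 : (0 : ℝ) < (3 * k : ℕ) := by exact_mod_cast (by omega : 0 < 3 * k)
  have hu : 1 ≤ u := one_le_rpow (by exact_mod_cast (by omega : 1 ≤ 3 * k)) (by norm_num)
  have ht : ((3 * k : ℕ) : ℝ) ^ ((83 : ℝ) / 100) = 3 * k / u := by
    rw [eq_div_iff (by positivity), ← rpow_add hS0]; norm_num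
  have hE : ((3 * k : ℕ) : ℝ) ^ ((66 : ℝ) / 100) = 3 * k / u ^ 2 := by
    rw [eq_div_iff (by positivity), ← rpow_natCast, ← rpow_mul hS0.le, ← rpow_add hS0]
    norm_num
  have hM4 : (4 : ℝ) ≤ M ^ 2 := by
    have : (2 : ℝ) ≤ M := by exact_mod_cast hM
    nlinarith
  have hexp := one_add_pow_le_exp_mul_two_rpow (k := k) (p := 2 / M ^ 2) hu (by positivity)
    (by rw [div_le_iff₀ (by positivity)]; linarith)
    (by rw [div_mul_eq_mul_div, div_le_iff₀ (by positivity)]; linarith)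
  rw [ht, hE]
  refine le_of_mul_le_mul_right ?_ (rpow_pos_of_pos two_pos (3 * k / u))
  calc _ ≤ ((M : ℝ) ^ 3 + 2 * M) ^ k := card_filter_lt_card_filter_isHitter_mul_rpow_le hM _
    _ = (M : ℝ) ^ (3 * k) * (1 + 2 / M ^ 2) ^ k := by
        rw [pow_mul, ← mul_pow]; congr 1; field_simp
    _ ≤ (M : ℝ) ^ (3 * k) * (exp (-(3 * k / u ^ 2) / 2) * 2 ^ (3 * k / u)) := by
        gcongr
    _ = _ := by ring
end

section
/- Let S ≥ 1 be an integer, n = 2^S, and let A = (a_1, …, a_n) be any real sequence. Fix a scale-s interval (l, r] with r = l + 2^s, 1 ≤ s ≤ S, and 2^s dividing l, and let A' be the sequence obtained from A by swapping the two halves of (l, r]: a'_x := a_{x + 2^{s−1}} for l < x ≤ l + 2^{s−1}, a'_x := a_{x − 2^{s−1}} for l + 2^{s−1} < x ≤ r, and a'_x := a_x for all other x. Then treemd_{2,S}(A') = treemd_{2,S}(A). -/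
/-!
Swapping the two halves of `(l, l + 2^s]` replaces `A` by `A ∘ σ` for an involution `σ` of the
indices. A dyadic interval of scale at least `s` is disjoint from `(l, l + 2^s]` or contains it, so
its sum is unchanged, except that `σ` exchanges the two halves of `(l, l + 2^s]` itself, which
does not change the absolute difference of their sums. A dyadic interval of scale `t < s` lies
outside `(l, l + 2^s]` or inside one of its halves, where `σ` is a translation by `± 2^(s-1)`;
so at scale `t` the swap merely permutes the deviations of the scale-`t` intervals.
-/

def halfSwap (h l x : ℕ) : ℕ :=
  if l < x ∧ x ≤ l + h then x + h
  else if l + h < x ∧ x ≤ l + 2 * h then x - h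
  else x

theorem halfSwap_involutive (h l : ℕ) : Function.Involutive (halfSwap h l) := by
  intro x
  unfold halfSwap
  split_ifs <;> omega

theorem aligned_disjoint_or_nested {d D a b : ℕ} (hdD : d ∣ D) (ha : d ∣ a) (hb : D ∣ b) :
    a + d ≤ b ∨ b + D ≤ a ∨ (b ≤ a ∧ a + d ≤ b + D) := by
  have hb' : d ∣ b := hdD.trans hb
  rcases lt_or_ge a b with hab | hba
  · have : d ≤ b - a := Nat.le_of_dvd (by omega) (Nat.dvd_sub hb' ha)
    omega
  · rcases le_or_gt (b + D) a with hDa | haD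
    · exact Or.inr (Or.inl hDa)
    · have : d ≤ b + D - a := Nat.le_of_dvd (by omega) (Nat.dvd_sub (dvd_add hb' hdD) ha)
      omega

theorem sum_range_eq_of_swap {β : Type*} [AddCommMonoid β] {f g : ℕ → β} {N L e : ℕ}
    (hN : L + 2 * e ≤ N) (hout : ∀ k, k < L ∨ L + 2 * e ≤ k → f k = g k)
    (hleft : ∀ k, L ≤ k → k < L + e → f k = g (k + e))
    (hright : ∀ k, L ≤ k → k < L + e → f (k + e) = g k) :
    ∑ k ∈ Finset.range N, f k = ∑ k ∈ Finset.range N, g k := by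
  let τ : ℕ → ℕ := fun k =>
    if L ≤ k ∧ k < L + e then k + e else if L + e ≤ k ∧ k < L + 2 * e then k - e else k
  refine Finset.sum_nbij' τ τ (fun k hk => ?_) (fun k hk => ?_) (fun k _ => ?_) (fun k _ => ?_)
    fun k _ => ?_
  iterate 4
    simp only [Finset.mem_range, τ] at *
    split_ifs <;> omega
  simp only [τ]
  split_ifs with h₁ h₂
  · exact hleft k h₁.1 h₁.2
  · obtain ⟨j, rfl⟩ : ∃ j, k = j + e := ⟨k - e, by omega⟩
    rw [Nat.add_sub_cancel]
    exact hright j (by omega) (by omega)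
  · exact hout k (by omega)

section IntervalSums

variable {σ : ℕ → ℕ} {A : ℕ → ℝ}

theorem iSum_comp_of_mapsTo (hσ : Function.Involutive σ) {m r : ℕ}
    (hmaps : ∀ x, m < x → x ≤ r → m < σ x ∧ σ x ≤ r) :
    iSum (A ∘ σ) m r = iSum A m r := by
  refine Finset.sum_nbij' σ σ (fun x hx => ?_) (fun x hx => ?_) (fun x _ => hσ x)
    (fun x _ => hσ x) fun _ _ => rfl
  all_goals
    rw [Finset.mem_Ioc] at hx ⊢
    exact hmaps x hx.1 hx.2

theorem iSum_comp_eq_of_add {m r d : ℕ} (hσ : ∀ x, m < x → x ≤ r → σ x = x + d) :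
    iSum (A ∘ σ) m r = iSum A (m + d) (r + d) := by
  rw [iSum, iSum, ← Finset.map_add_right_Ioc, Finset.sum_map]
  refine Finset.sum_congr rfl fun x hx => ?_
  rw [Finset.mem_Ioc] at hx
  simp [hσ x hx.1 hx.2]

theorem mdAt_comp_eq_of_add {M t p d : ℕ} (ht : 1 ≤ t)
    (hσ : ∀ x, p < x → x ≤ p + M ^ t → σ x = x + d) :
    mdAt M t p (A ∘ σ) = mdAt M t (p + d) A := by
  have hsub : ∀ i < M, (i + 1) * M ^ (t - 1) ≤ M ^ t := fun i hi =>
    calc (i + 1) * M ^ (t - 1) ≤ M * M ^ (t - 1) := Nat.mul_le_mul_right _ hi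
      _ = M ^ t := mul_pow_sub_one (by omega) M
  refine Finset.sum_congr rfl fun i hi => ?_
  have hi := hsub i (Finset.mem_range.1 hi)
  rw [iSum_comp_eq_of_add fun x h₁ h₂ => hσ x (by omega) (by omega),
    iSum_comp_eq_of_add fun x h₁ h₂ => hσ x h₁ h₂]
  simp only [add_right_comm p _ d]

end IntervalSums

theorem mdAt_two_eq (t p : ℕ) (ht : 1 ≤ t) (A : ℕ → ℝ) :
    mdAt 2 t p A = |iSum A p (p + 2 ^ (t - 1)) - iSum A (p + 2 ^ (t - 1)) (p + 2 ^ t)| := by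
  have h2t : 2 ^ t = 2 * 2 ^ (t - 1) := (mul_pow_sub_one (by omega) 2).symm
  have hsplit : iSum A p (p + 2 ^ t) =
      iSum A p (p + 2 ^ (t - 1)) + iSum A (p + 2 ^ (t - 1)) (p + 2 ^ t) :=
    (Finset.sum_Ioc_consecutive _ (by omega) (by omega)).symm
  rw [mdAt, Finset.sum_range_succ, Finset.sum_range_one, hsplit, h2t]
  simp only [Nat.cast_ofNat, zero_mul, add_zero, one_mul, Nat.reduceAdd]
  generalize iSum A p (p + 2 ^ (t - 1)) = a
  generalize iSum A (p + 2 ^ (t - 1)) (p + 2 * 2 ^ (t - 1)) = b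
  rw [show a - 1 / 2 * (a + b) = (a - b) / 2 by ring,
    show b - 1 / 2 * (a + b) = -((a - b) / 2) by ring, abs_neg, ← two_mul, abs_div, abs_two]
  ring

section HalfSwap

variable {A : ℕ → ℝ} {h l : ℕ}

theorem iSum_comp_halfSwap_of_nested {m r : ℕ}
    (hmr : l + 2 * h ≤ m ∨ r ≤ l ∨ (m ≤ l ∧ l + 2 * h ≤ r)) :
    iSum (A ∘ halfSwap h l) m r = iSum A m r :=
  iSum_comp_of_mapsTo (halfSwap_involutive h l) fun x _ _ => by
    unfold halfSwap
    split_ifs <;> omega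

theorem iSum_comp_halfSwap_left :
    iSum (A ∘ halfSwap h l) l (l + h) = iSum A (l + h) (l + 2 * h) := by
  rw [iSum_comp_eq_of_add (σ := halfSwap h l) fun x h₁ h₂ => if_pos ⟨h₁, h₂⟩, two_mul, add_assoc]

theorem iSum_comp_halfSwap_right :
    iSum (A ∘ halfSwap h l) (l + h) (l + 2 * h) = iSum A l (l + h) := by
  have := iSum_comp_halfSwap_left (A := A ∘ halfSwap h l) (h := h) (l := l)
  rwa [Function.comp_assoc, (halfSwap_involutive h l).comp_self, Function.comp_id, eq_comm] at this

variable {M t p : ℕ}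

theorem mdAt_comp_halfSwap_of_disjoint (ht : 1 ≤ t) (hp : p + M ^ t ≤ l ∨ l + 2 * h ≤ p) :
    mdAt M t p (A ∘ halfSwap h l) = mdAt M t p A :=
  mdAt_comp_eq_of_add (d := 0) ht fun x _ _ => by
    unfold halfSwap
    split_ifs <;> omega

theorem mdAt_comp_halfSwap_of_subset (ht : 1 ≤ t) (hlp : l ≤ p) (hph : p + M ^ t ≤ l + h) :
    mdAt M t p (A ∘ halfSwap h l) = mdAt M t (p + h) A :=
  mdAt_comp_eq_of_add ht fun x h₁ h₂ => if_pos ⟨by omega, by omega⟩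

theorem mdAt_comp_halfSwap_add_of_subset (ht : 1 ≤ t) (hlp : l ≤ p) (hph : p + M ^ t ≤ l + h) :
    mdAt M t (p + h) (A ∘ halfSwap h l) = mdAt M t p A := by
  have := mdAt_comp_halfSwap_of_subset (A := A ∘ halfSwap h l) ht hlp hph
  rwa [Function.comp_assoc, (halfSwap_involutive h l).comp_self, Function.comp_id, eq_comm] at this

end HalfSwap

theorem mdAt_comp_halfSwap_of_le {A : ℕ → ℝ} {s t l p : ℕ} (hs : 1 ≤ s) (hst : s ≤ t)
    (hl : 2 ^ s ∣ l) (hp : 2 ^ t ∣ p) :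
    mdAt 2 t p (A ∘ halfSwap (2 ^ (s - 1)) l) = mdAt 2 t p A := by
  have ht : 1 ≤ t := hs.trans hst
  have h2s : 2 ^ s = 2 * 2 ^ (s - 1) := (mul_pow_sub_one (by omega) 2).symm
  have h2t : 2 ^ t = 2 * 2 ^ (t - 1) := (mul_pow_sub_one (by omega) 2).symm
  rw [mdAt_two_eq t p ht, mdAt_two_eq t p ht]
  rcases hst.eq_or_lt with rfl | hlt
  · rcases aligned_disjoint_or_nested dvd_rfl hp hl with hd | hd | hd
    · rw [iSum_comp_halfSwap_of_nested (by omega), iSum_comp_halfSwap_of_nested (by omega)]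
    · rw [iSum_comp_halfSwap_of_nested (by omega), iSum_comp_halfSwap_of_nested (by omega)]
    · obtain rfl : p = l := by omega
      rw [h2s, iSum_comp_halfSwap_left, iSum_comp_halfSwap_right, abs_sub_comm]
  · have hdvd : 2 ^ s ∣ 2 ^ (t - 1) := pow_dvd_pow 2 (by omega)
    have hp' : 2 ^ (t - 1) ∣ p := (pow_dvd_pow 2 (Nat.sub_le t 1)).trans hp
    have hp'' : 2 ^ (t - 1) ∣ p + 2 ^ (t - 1) := dvd_add hp' dvd_rfl
    have hleft := aligned_disjoint_or_nested hdvd hl hp'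
    have hright := aligned_disjoint_or_nested hdvd hl hp''
    rw [iSum_comp_halfSwap_of_nested (by omega), iSum_comp_halfSwap_of_nested (by omega)]

theorem sum_mdAt_comp_halfSwap_of_lt {A : ℕ → ℝ} {S s t l : ℕ} (ht : 1 ≤ t) (htS : t ≤ S)
    (hts : t < s) (hl : 2 ^ s ∣ l) (hlS : l + 2 ^ s ≤ 2 ^ S) :
    ∑ k ∈ Finset.range (2 ^ (S - t)), mdAt 2 t (k * 2 ^ t) (A ∘ halfSwap (2 ^ (s - 1)) l) =
      ∑ k ∈ Finset.range (2 ^ (S - t)), mdAt 2 t (k * 2 ^ t) A := by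
  obtain ⟨e, he⟩ : 2 ^ t ∣ 2 ^ (s - 1) := pow_dvd_pow 2 (by omega)
  obtain ⟨L, hL⟩ : 2 ^ t ∣ l := (pow_dvd_pow 2 hts.le).trans hl
  have h2s : 2 ^ s = 2 * 2 ^ (s - 1) := (mul_pow_sub_one (by omega) 2).symm
  have hSt : 2 ^ S = 2 ^ (S - t) * 2 ^ t := by rw [← pow_add]; congr 1; omega
  have hpos : 0 < 2 ^ t := by positivity
  refine sum_range_eq_of_swap (L := L) (e := e) ?_ (fun k hk => ?_) (fun k h₁ h₂ => ?_)
    fun k h₁ h₂ => ?_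
  · nlinarith
  · refine mdAt_comp_halfSwap_of_disjoint ht ?_
    rcases hk with hk | hk
    · left; nlinarith
    · right; nlinarith
  · rw [mdAt_comp_halfSwap_of_subset ht (by nlinarith) (by nlinarith)]
    congr 1; rw [he]; ring
  · rw [show (k + e) * 2 ^ t = k * 2 ^ t + 2 ^ (s - 1) by rw [he]; ring]
    exact mdAt_comp_halfSwap_add_of_subset ht (by nlinarith) (by nlinarith)

theorem treemd_comp_halfSwap {S s l : ℕ} (A : ℕ → ℝ) (hs1 : 1 ≤ s) (hsS : s ≤ S)
    (hdvd : 2 ^ s ∣ l) (hl : l < 2 ^ S) :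
    treemd 2 S (A ∘ halfSwap (2 ^ (s - 1)) l) = treemd 2 S A := by
  have hlS : l + 2 ^ s ≤ 2 ^ S := by
    have := aligned_disjoint_or_nested (pow_dvd_pow 2 hsS) hdvd (dvd_zero (2 ^ S))
    omega
  refine Finset.sum_congr rfl fun t ht => ?_
  obtain ⟨ht1, htS⟩ := Finset.mem_Icc.1 ht
  rcases lt_or_ge t s with hts | hst
  · exact sum_mdAt_comp_halfSwap_of_lt ht1 htS hts hdvd hlS
  · exact Finset.sum_congr rfl fun k _ =>
      mdAt_comp_halfSwap_of_le hs1 hst hdvd (dvd_mul_left _ _)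

theorem stmt15_general (S : ℕ) (A : ℕ → ℝ) (s : ℕ) (hs1 : 1 ≤ s) (hsS : s ≤ S)
    (l : ℕ) (hdvd : 2 ^ s ∣ l) (hl : l < 2 ^ S) :
    treemd 2 S (fun x =>
        if l < x ∧ x ≤ l + 2 ^ (s - 1) then A (x + 2 ^ (s - 1))
        else if l + 2 ^ (s - 1) < x ∧ x ≤ l + 2 ^ s then A (x - 2 ^ (s - 1))
        else A x) =
      treemd 2 S A := by
  have h2s : 2 ^ s = 2 * 2 ^ (s - 1) := (mul_pow_sub_one (by omega) 2).symm
  convert treemd_comp_halfSwap A hs1 hsS hdvd hl using 2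
  funext x
  simp only [Function.comp_apply, halfSwap, h2s]
  split_ifs <;> rfl

/-- For `M = 2`, `S ≥ 1`, `n = 2^S`: swapping the two halves of a single
scale-`s` interval `(l, l+2^s]` (with `1 ≤ s ≤ S`, `2^s ∣ l`, `l < 2^S`) leaves the tree
total deviation unchanged: `treemd_{2,S}(A') = treemd_{2,S}(A)`, where `A'` agrees with `A`
outside `(l, l+2^s]` and interchanges the two halves of that interval. -/
theorem stmt15 (S : ℕ) (hS : 1 ≤ S) (A : ℕ → ℝ) (s : ℕ) (hs1 : 1 ≤ s) (hsS : s ≤ S)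
    (l : ℕ) (hdvd : 2 ^ s ∣ l) (hl : l < 2 ^ S) :
    treemd 2 S (fun x =>
        if l < x ∧ x ≤ l + 2 ^ (s - 1) then A (x + 2 ^ (s - 1))
        else if l + 2 ^ (s - 1) < x ∧ x ≤ l + 2 ^ s then A (x - 2 ^ (s - 1))
        else A x) =
      treemd 2 S A :=
  stmt15_general S A s hs1 hsS l hdvd hl
end
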